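/- arXiv:2111.01239 — 12 statements merged into one kernel-verified Lean document; each statement's English description precedes it below -/
import Mathlib

section
/- Let r>0 and let p:[0,∞)→(0,1] be a decreasing, continuous survival function with p(0)=1 and p(t)→0 as t→∞, with ∫_0^∞ e^{-rt} p(t) dt < ∞. Define F(α)=∫_α^∞ e^{-rt} p(t) dt and G(α)=r∫_0^α e^{-rt}(α−t) p(t) dt. Then there exists a unique α*>0 such that F(α*)=G(α*). -/
open MeasureTheory Set Filter

theorem cria_unloaded_exists_unique
    (r : ℝ) (hr : 0 < r) (p : ℝ → ℝ)
    (hanti : AntitoneOn p (Ici 0))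
    (hcont : ContinuousOn p (Ici 0))
    (hpos : ∀ t, 0 ≤ t → 0 < p t) (hle : ∀ t, 0 ≤ t → p t ≤ 1)
    (hp0 : p 0 = 1)
    (hlim : Tendsto p atTop (nhds 0))
    (hint : IntegrableOn (fun t => Real.exp (-(r * t)) * p t) (Ioi 0)) :
    ∃! α : ℝ, 0 < α ∧
      (∫ t in Ioi α, Real.exp (-(r * t)) * p t) =
        r * ∫ t in (0 : ℝ)..α, Real.exp (-(r * t)) * (α - t) * p t := by
  classical
  set f : ℝ → ℝ := fun t => Real.exp (-(r * t)) * p t with hfdef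
  have hfc : ContinuousOn f (Ici 0) :=
    ((Real.continuous_exp.comp (continuous_const.mul continuous_id).neg).continuousOn).mul hcont
  have hfpos : ∀ t, 0 ≤ t → 0 < f t := fun t ht => mul_pos (Real.exp_pos _) (hpos t ht)
  have hfnn : ∀ t, 0 ≤ t → 0 ≤ f t := fun t ht => (hfpos t ht).le
  -- interval integrability on nonnegative intervals, also for continuous multiples
  have hsub : ∀ a b : ℝ, 0 ≤ a → 0 ≤ b → uIcc a b ⊆ Ici 0 := by
    intro a b ha hb x hx
    exact le_trans (le_min ha hb) hx.1
  have hII : ∀ (g : ℝ → ℝ), Continuous g → ∀ a b : ℝ, 0 ≤ a → 0 ≤ b →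
      IntervalIntegrable (fun t => g t * f t) volume a b := by
    intro g hg a b ha hb
    exact ((hg.continuousOn.mul hfc).mono (hsub a b ha hb)).intervalIntegrable
  have hIIf : ∀ a b : ℝ, 0 ≤ a → 0 ≤ b → IntervalIntegrable f volume a b := by
    intro a b ha hb
    exact (hfc.mono (hsub a b ha hb)).intervalIntegrable
  -- notation
  set F : ℝ → ℝ := fun α => ∫ t in Ioi α, f t with hFdef
  set G : ℝ → ℝ := fun α => ∫ t in (0:ℝ)..α, (α - t) * f t with hGdef
  set φ : ℝ → ℝ := fun α => F α - r * G α with hφdef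
  -- rewrite the goal integrand
  have hGeq : ∀ α : ℝ, (∫ t in (0:ℝ)..α, Real.exp (-(r * t)) * (α - t) * p t) = G α := by
    intro α
    refine intervalIntegral.integral_congr fun t _ => ?_
    show Real.exp (-(r * t)) * (α - t) * p t = (α - t) * f t
    simp only [hfdef]; ring
  -- F is strictly decreasing on Ici 0
  have hFsplit : ∀ a b : ℝ, 0 ≤ a → a ≤ b → F a = (∫ t in a..b, f t) + F b := by
    intro a b ha hab
    have h1 : Ioc a b ∪ Ioi b = Ioi a := Ioc_union_Ioi_eq_Ioi hab
    have hi1 : IntegrableOn f (Ioc a b) := (hIIf a b ha (ha.trans hab)).1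
    have hi2 : IntegrableOn f (Ioi b) :=
      hint.mono_set (Ioi_subset_Ioi (ha.trans hab))
    have hd : Disjoint (Ioc a b) (Ioi b) :=
      Set.disjoint_left.mpr fun x hx hx' => absurd hx' (not_lt.mpr hx.2)
    show (∫ t in Ioi a, f t) = (∫ t in a..b, f t) + ∫ t in Ioi b, f t
    rw [← h1, setIntegral_union hd measurableSet_Ioi hi1 hi2,
      intervalIntegral.integral_of_le hab]
  have hFanti : ∀ a b : ℝ, 0 ≤ a → a < b → F b < F a := by
    intro a b ha hab
    have hpos' : 0 < ∫ t in a..b, f t := by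
      refine intervalIntegral.intervalIntegral_pos_of_pos_on (hIIf a b ha (ha.trans hab.le))
        (fun x hx => hfpos x (ha.trans hx.1.le)) hab
    have := hFsplit a b ha hab.le
    linarith
  -- G is monotone on Ici 0
  have hGmono : ∀ a b : ℝ, 0 ≤ a → a ≤ b → G a ≤ G b := by
    intro a b ha hab
    have hb : 0 ≤ b := ha.trans hab
    have h1 : G a ≤ ∫ t in (0:ℝ)..a, (b - t) * f t := by
      refine intervalIntegral.integral_mono_on ha
        (hII _ (continuous_const.sub continuous_id) 0 a le_rfl ha) (hII _ (continuous_const.sub continuous_id) 0 a le_rfl ha)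
        (fun x hx => ?_)
      nlinarith [hfnn x hx.1, mul_nonneg (sub_nonneg.mpr hab) (hfnn x hx.1)]
    have h2 : (∫ t in (0:ℝ)..a, (b - t) * f t) + (∫ t in a..b, (b - t) * f t)
        = ∫ t in (0:ℝ)..b, (b - t) * f t := by
      exact intervalIntegral.integral_add_adjacent_intervals
        (hII _ (continuous_const.sub continuous_id) 0 a le_rfl ha) (hII _ (continuous_const.sub continuous_id) a b ha hb)
    have h3 : 0 ≤ ∫ t in a..b, (b - t) * f t := by
      refine intervalIntegral.integral_nonneg hab (fun x hx => ?_)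
      exact mul_nonneg (sub_nonneg.mpr hx.2) (hfnn x (ha.trans hx.1))
    calc G a ≤ ∫ t in (0:ℝ)..a, (b - t) * f t := h1
    _ ≤ ∫ t in (0:ℝ)..b, (b - t) * f t := by linarith
    _ = G b := rfl
  -- φ strictly antitone on Ici 0
  have hφanti : StrictAntiOn φ (Ici 0) := by
    intro a ha b hb hab
    have h1 := hFanti a b ha hab
    have h2 := hGmono a b ha hab.le
    have h3 : r * G a ≤ r * G b := by nlinarith
    simp only [hφdef]
    linarith
  -- φ 0 > 0
  have hc1 : 0 < ∫ t in (0:ℝ)..1, f t :=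
    intervalIntegral.intervalIntegral_pos_of_pos_on (hIIf 0 1 le_rfl zero_le_one)
      (fun x hx => hfpos x hx.1.le) one_pos
  have hFnonneg : ∀ b : ℝ, 0 ≤ b → 0 ≤ F b := by
    intro b hb
    refine setIntegral_nonneg measurableSet_Ioi (fun x hx => hfnn x (hb.trans (le_of_lt hx)))
  have hφ0 : 0 < φ 0 := by
    have hG0 : G 0 = 0 := intervalIntegral.integral_same
    have hF0 : 0 < F 0 := by
      have := hFsplit 0 1 le_rfl zero_le_one
      have := hFnonneg 1 zero_le_one
      linarith
    simp only [hφdef, hG0]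
    linarith
  -- choose M with φ M < 0
  set c : ℝ := ∫ t in (0:ℝ)..1, f t with hcdef
  set M : ℝ := 1 + (F 0 + 1) / (r * c) with hMdef
  have hrc : 0 < r * c := mul_pos hr hc1
  have hM1 : 1 ≤ M := by
    have hF0 : 0 ≤ F 0 := hFnonneg 0 le_rfl
    have h' : 0 ≤ (F 0 + 1) / (r * c) := div_nonneg (by linarith) hrc.le
    rw [hMdef]
    linarith
  have hM0 : (0:ℝ) ≤ M := by linarith
  have hGM : (M - 1) * c ≤ G M := by
    have h1 : (∫ t in (0:ℝ)..1, (M - 1) * f t) ≤ ∫ t in (0:ℝ)..1, (M - t) * f t := by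
      refine intervalIntegral.integral_mono_on zero_le_one
        (hII (fun _ => M - 1) continuous_const 0 1 le_rfl zero_le_one)
        (hII _ (continuous_const.sub continuous_id) 0 1 le_rfl zero_le_one) (fun x hx => ?_)
      nlinarith [hfnn x hx.1, mul_nonneg (sub_nonneg.mpr hx.2) (hfnn x hx.1)]
    have h2 : (∫ t in (0:ℝ)..1, (M - t) * f t) + (∫ t in (1:ℝ)..M, (M - t) * f t)
        = ∫ t in (0:ℝ)..M, (M - t) * f t :=
      intervalIntegral.integral_add_adjacent_intervals
        (hII _ (continuous_const.sub continuous_id) 0 1 le_rfl zero_le_one)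
        (hII _ (continuous_const.sub continuous_id) 1 M zero_le_one hM0)
    have h3 : 0 ≤ ∫ t in (1:ℝ)..M, (M - t) * f t := by
      refine intervalIntegral.integral_nonneg hM1 (fun x hx => ?_)
      exact mul_nonneg (sub_nonneg.mpr hx.2) (hfnn x (zero_le_one.trans hx.1))
    have h4 : (∫ t in (0:ℝ)..1, (M - 1) * f t) = (M - 1) * c := by
      rw [hcdef]
      exact intervalIntegral.integral_const_mul _ _
    show (M - 1) * c ≤ ∫ t in (0:ℝ)..M, (M - t) * f t
    linarith
  have hFM : F M ≤ F 0 := by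
    have := hFsplit 0 M le_rfl hM0
    have h0 : 0 ≤ ∫ t in (0:ℝ)..M, f t :=
      intervalIntegral.integral_nonneg hM0 (fun x hx => hfnn x hx.1)
    linarith
  have hφM : φ M < 0 := by
    have hrm : r * ((M - 1) * c) ≤ r * G M := by nlinarith
    have : r * ((M - 1) * c) = F 0 + 1 := by
      rw [hMdef]
      field_simp
      ring
    simp only [hφdef]
    linarith
  -- continuity of φ on Icc 0 M
  have hfInt : IntegrableOn f (Icc 0 M) :=
    (hfc.mono (Icc_subset_Ici_self)).integrableOn_Icc
  have htfInt : IntegrableOn (fun t => t * f t) (Icc 0 M) :=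
    (((continuous_id.continuousOn).mul hfc).mono (Icc_subset_Ici_self)).integrableOn_Icc
  have hu : uIcc (0:ℝ) M = Icc 0 M := uIcc_of_le hM0
  have hAcont : ContinuousOn (fun x => ∫ t in (0:ℝ)..x, f t) (Icc 0 M) := by
    have := intervalIntegral.continuousOn_primitive_interval (a := (0:ℝ)) (b := M)
      (μ := volume) (f := f) (by rwa [hu])
    rwa [hu] at this
  have hBcont : ContinuousOn (fun x => ∫ t in (0:ℝ)..x, t * f t) (Icc 0 M) := by
    have := intervalIntegral.continuousOn_primitive_interval (a := (0:ℝ)) (b := M)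
      (μ := volume) (f := fun t => t * f t) (by rwa [hu])
    rwa [hu] at this
  have hφeq : ∀ α ∈ Icc (0:ℝ) M, φ α =
      F 0 - (∫ t in (0:ℝ)..α, f t)
        - r * (α * (∫ t in (0:ℝ)..α, f t) - ∫ t in (0:ℝ)..α, t * f t) := by
    intro α hα
    have hFα : F α = F 0 - ∫ t in (0:ℝ)..α, f t := by
      have := hFsplit 0 α le_rfl hα.1
      linarith
    have hGα : G α = α * (∫ t in (0:ℝ)..α, f t) - ∫ t in (0:ℝ)..α, t * f t := by
      have h1 : G α = ∫ t in (0:ℝ)..α, (α * f t - t * f t) := by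
        refine intervalIntegral.integral_congr fun t _ => by ring
      rw [h1, intervalIntegral.integral_sub (hII (fun _ => α) continuous_const 0 α le_rfl hα.1)
        (hII (fun t => t) continuous_id 0 α le_rfl hα.1),
        intervalIntegral.integral_const_mul]
    simp only [hφdef]
    rw [hFα, hGα]
  have hφcont : ContinuousOn φ (Icc 0 M) := by
    refine ContinuousOn.congr ?_ (fun x hx => (hφeq x hx))
    exact (continuousOn_const.sub hAcont).sub
      (continuousOn_const.mul ((continuousOn_id.mul hAcont).sub hBcont))
  -- IVT
  have hmem : (0:ℝ) ∈ Icc (φ M) (φ 0) := ⟨hφM.le, hφ0.le⟩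
  obtain ⟨α, hαmem, hαeq⟩ := intermediate_value_Icc' hM0 hφcont hmem
  have hαpos : 0 < α := by
    rcases eq_or_lt_of_le hαmem.1 with h | h
    · exfalso; rw [← h] at hαeq; exact absurd hαeq (ne_of_gt hφ0)
    · exact h
  refine ⟨α, ⟨hαpos, ?_⟩, ?_⟩
  · rw [hGeq α]
    have : F α - r * G α = 0 := hαeq
    show F α = r * G α
    linarith
  · rintro β ⟨hβpos, hβeq⟩
    rw [hGeq β] at hβeq
    have hφβ : φ β = 0 := by simp only [hφdef]; linarith [hβeq]
    exact hφanti.injOn hβpos.le hαpos.le (by rw [hφβ, hαeq])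
end

section
/- Let r>0 and p:[0,∞)→(0,1] be a strictly decreasing continuous survival function with p(0)=1. Define F(α)=∫_α^∞ e^{-rt} p(t) dt and G(α)=r∫_0^α e^{-rt}(α−t) p(t) dt, and suppose α*>0 satisfies F(α*)=G(α*). Then r·α* < 1. -/
open MeasureTheory Set Filter

theorem cria_price_times_rate_lt_one
    (r : ℝ) (hr : 0 < r) (p : ℝ → ℝ)
    (hanti : StrictAntiOn p (Ici 0))
    (hcont : ContinuousOn p (Ici 0))
    (hpos : ∀ t, 0 ≤ t → 0 < p t) (hle : ∀ t, 0 ≤ t → p t ≤ 1)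
    (hp0 : p 0 = 1)
    (α : ℝ) (hα : 0 < α)
    (hsol : (∫ t in Ioi α, Real.exp (-(r * t)) * p t) =
        r * ∫ t in (0 : ℝ)..α, Real.exp (-(r * t)) * (α - t) * p t) :
    r * α < 1 := by
  have hpα : 0 < p α := hpos α hα.le
  have hexpint : IntegrableOn (fun t : ℝ => Real.exp (-(r * t))) (Ioi α) := by
    have := exp_neg_integrableOn_Ioi α hr
    simpa [neg_mul] using this
  -- value of ∫_{Ioi α} exp(-(r t))
  have hIexp : (∫ t in Ioi α, Real.exp (-(r * t))) = Real.exp (-(r * α)) / r := by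
    have hderiv : ∀ x ∈ Ici α, HasDerivAt (fun t => -Real.exp (-(r * t)) / r)
        (Real.exp (-(r * x))) x := by
      intro x _
      have h1 : HasDerivAt (fun t : ℝ => -(r * t)) (-r) x := by
        exact (by simpa using ((hasDerivAt_id x).const_mul r).neg : HasDerivAt (-fun y => r * y) (-r) x)
      have h2 := (Real.hasDerivAt_exp (-(r * x))).comp x h1
      have h3 := h2.neg.div_const r
      refine h3.congr_deriv ?_
      field_simp
    have htend : Tendsto (fun t => -Real.exp (-(r * t)) / r) atTop (nhds 0) := by
      have h0 : Tendsto (fun t : ℝ => r * t) atTop atTop :=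
        Filter.Tendsto.const_mul_atTop hr tendsto_id
      have h1 : Tendsto (fun t : ℝ => Real.exp (-(r * t))) atTop (nhds 0) :=
        Real.tendsto_exp_neg_atTop_nhds_zero.comp h0
      have := (h1.neg).div_const r
      simpa using this
    have := integral_Ioi_of_hasDerivAt_of_tendsto' hderiv hexpint htend
    rw [this]; ring
  -- integrability of the F integrand
  have hmeas : AEStronglyMeasurable (fun t => Real.exp (-(r * t)) * p t)
      (volume.restrict (Ioi α)) := by
    apply ContinuousOn.aestronglyMeasurable _ measurableSet_Ioi
    exact (Real.continuous_exp.comp (continuous_const.mul continuous_id).neg).continuousOn.mul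
      (hcont.mono (fun x hx => le_of_lt (lt_of_le_of_lt hα.le hx)))
  have hFint : IntegrableOn (fun t => Real.exp (-(r * t)) * p t) (Ioi α) := by
    refine Integrable.mono' hexpint hmeas ?_
    filter_upwards [ae_restrict_mem measurableSet_Ioi] with x hx
    have hx0 : (0:ℝ) ≤ x := le_of_lt (lt_of_le_of_lt hα.le hx)
    have := hpos x hx0
    rw [Real.norm_eq_abs, abs_of_pos (by positivity)]
    nlinarith [hle x hx0, Real.exp_pos (-(r * x))]
  -- upper bound for F
  have hF : (∫ t in Ioi α, Real.exp (-(r * t)) * p t)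
      ≤ p α * (Real.exp (-(r * α)) / r) := by
    have hmono : ∀ x ∈ Ioi α, Real.exp (-(r * x)) * p x ≤ Real.exp (-(r * x)) * p α := by
      intro x hx
      have hpx : p x ≤ p α := (hanti (mem_Ici.2 hα.le) (mem_Ici.2 (le_of_lt
        (lt_of_le_of_lt hα.le hx))) hx).le
      exact mul_le_mul_of_nonneg_left hpx (Real.exp_pos _).le
    calc (∫ t in Ioi α, Real.exp (-(r * t)) * p t)
        ≤ ∫ t in Ioi α, Real.exp (-(r * t)) * p α :=
          setIntegral_mono_on hFint (hexpint.mul_const _) measurableSet_Ioi hmono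
      _ = p α * (Real.exp (-(r * α)) / r) := by
          rw [integral_mul_const, hIexp]; ring
  -- lower bound for G's inner integral
  have hval : (∫ t in (0:ℝ)..α, Real.exp (-(r * t)) * (α - t) * p α)
      = p α * (Real.exp (-(r * α)) / r ^ 2 + α / r - 1 / r ^ 2) := by
    have hderiv : ∀ x ∈ uIcc (0:ℝ) α, HasDerivAt
        (fun t => p α * ((t - α) * Real.exp (-(r * t)) / r + Real.exp (-(r * t)) / r ^ 2))
        (Real.exp (-(r * x)) * (α - x) * p α) x := by
      intro x _
      have h1 : HasDerivAt (fun t : ℝ => -(r * t)) (-r) x := by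
        exact (by simpa using ((hasDerivAt_id x).const_mul r).neg : HasDerivAt (-fun y => r * y) (-r) x)
      have hexp : HasDerivAt (fun t : ℝ => Real.exp (-(r * t)))
          (Real.exp (-(r * x)) * (-r)) x := by
          have := (Real.hasDerivAt_exp (-(r * x))).comp x h1; exact this
      have hsub : HasDerivAt (fun t : ℝ => t - α) 1 x := (hasDerivAt_id x).sub_const α
      have hmul := hsub.mul hexp
      have h := ((hmul.div_const r).add (hexp.div_const (r ^ 2))).const_mul (p α)
      refine h.congr_deriv ?_
      field_simp
      ring
    have := intervalIntegral.integral_eq_sub_of_hasDerivAt hderiv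
      (by
        apply ContinuousOn.intervalIntegrable
        apply ContinuousOn.mul _ continuousOn_const
        exact ((Real.continuous_exp.comp (continuous_const.mul continuous_id).neg).continuousOn).mul
          (continuous_const.sub continuous_id).continuousOn)
    rw [this]
    field_simp
    simp only [mul_zero, neg_zero, Real.exp_zero]
    ring
  have hG : p α * (Real.exp (-(r * α)) / r ^ 2 + α / r - 1 / r ^ 2)
      < ∫ t in (0:ℝ)..α, Real.exp (-(r * t)) * (α - t) * p t := by
    rw [← hval]
    apply intervalIntegral.integral_lt_integral_of_continuousOn_of_le_of_exists_lt hα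
    · exact (((Real.continuous_exp.comp (continuous_const.mul
        continuous_id).neg).continuousOn).mul (continuous_const.sub
        continuous_id).continuousOn).mul continuousOn_const
    · exact (((Real.continuous_exp.comp (continuous_const.mul
        continuous_id).neg).continuousOn).mul (continuous_const.sub
        continuous_id).continuousOn).mul (hcont.mono (fun x hx => hx.1))
    · intro x hx
      have hpx : p α ≤ p x := by
        rcases eq_or_lt_of_le hx.2 with h | h
        · rw [h]
        · exact (hanti (mem_Ici.2 hx.1.le) (mem_Ici.2 hα.le) h).le
      have h1 : 0 ≤ Real.exp (-(r * x)) * (α - x) := by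
        apply mul_nonneg (Real.exp_pos _).le (by linarith [hx.2])
      exact mul_le_mul_of_nonneg_left hpx h1
    · refine ⟨0, ⟨le_refl _, hα.le⟩, ?_⟩
      have : p α < 1 := hp0 ▸ hanti (mem_Ici.2 le_rfl) (mem_Ici.2 hα.le) hα
      have h1 : (0:ℝ) < Real.exp (-(r * 0)) * (α - 0) := by
        apply mul_pos (Real.exp_pos _); linarith
      rw [hp0]
      nlinarith
  -- combine
  have hcomb : p α * (Real.exp (-(r * α)) / r ^ 2 + α / r - 1 / r ^ 2) * r
      < p α * (Real.exp (-(r * α)) / r) := by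
    calc p α * (Real.exp (-(r * α)) / r ^ 2 + α / r - 1 / r ^ 2) * r
        < (∫ t in (0:ℝ)..α, Real.exp (-(r * t)) * (α - t) * p t) * r :=
          mul_lt_mul_of_pos_right hG hr
      _ = ∫ t in Ioi α, Real.exp (-(r * t)) * p t := by rw [hsol]; ring
      _ ≤ p α * (Real.exp (-(r * α)) / r) := hF
  have hr' : r ≠ 0 := hr.ne'
  have heq : p α * (Real.exp (-(r * α)) / r ^ 2 + α / r - 1 / r ^ 2) * r
      = p α * (Real.exp (-(r * α)) / r) + p α * (α - 1 / r) := by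
    field_simp
    ring
  have h2 : p α * (α - 1 / r) < 0 := by
    rw [heq] at hcomb
    linarith
  have hα1 : α - 1 / r < 0 := by
    by_contra h
    push_neg at h
    nlinarith
  have h3 : α * r < 1 := (lt_div_iff₀ hr).1 (by linarith)
  calc r * α = α * r := mul_comm r α
    _ < 1 := h3
end

section
/- Let p:[0,∞)→(0,1] be a decreasing continuous survival function with ∫_0^∞ p(t)dt<∞. For r>0 define F(α;r)=∫_α^∞ e^{-rt}p(t)dt and G(α;r)=r∫_0^α e^{-rt}(α−t)p(t)dt, and let a*(r) be the unique positive solution of F(α;r)=G(α;r). Then a*(r) is strictly decreasing in r. -/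
open MeasureTheory Set Filter

private lemma cria_meas_aux {p : ℝ → ℝ} (hint : IntegrableOn p (Ioi 0))
    (r : ℝ) {α : ℝ} (hα : 0 ≤ α) :
    AEStronglyMeasurable (fun t => Real.exp (-(r * t)) * p t) (volume.restrict (Ioi α)) := by
  have h1 : AEStronglyMeasurable p (volume.restrict (Ioi α)) :=
    hint.1.mono_measure (Measure.restrict_mono (Ioi_subset_Ioi hα) le_rfl)
  exact ((Real.continuous_exp.comp ((continuous_const.mul continuous_id).neg)).aestronglyMeasurable).mul h1

private lemma cria_int_aux {p : ℝ → ℝ} (hint : IntegrableOn p (Ioi 0))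
    {r : ℝ} (hr : 0 ≤ r) {α : ℝ} (hα : 0 ≤ α) :
    IntegrableOn (fun t => Real.exp (-(r * t)) * p t) (Ioi α) := by
  refine Integrable.mono (hint.mono_set (Ioi_subset_Ioi hα)) (cria_meas_aux hint r hα) ?_
  refine (ae_restrict_iff' measurableSet_Ioi).2 (ae_of_all _ fun t ht => ?_)
  have h0 : (0:ℝ) ≤ t := le_of_lt (lt_of_le_of_lt hα ht)
  have he : Real.exp (-(r * t)) ≤ 1 := by
    rw [Real.exp_le_one_iff]
    exact neg_nonpos.2 (mul_nonneg hr h0)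
  have he0 : (0:ℝ) ≤ Real.exp (-(r * t)) := (Real.exp_pos _).le
  calc ‖Real.exp (-(r * t)) * p t‖ = Real.exp (-(r * t)) * ‖p t‖ := by
        rw [norm_mul, Real.norm_eq_abs (Real.exp _), abs_of_nonneg he0]
    _ ≤ 1 * ‖p t‖ := mul_le_mul_of_nonneg_right he (norm_nonneg _)
    _ = ‖p t‖ := one_mul _

theorem cria_price_strict_anti_in_rate
    (p : ℝ → ℝ)
    (hanti : AntitoneOn p (Ici 0))
    (hcont : ContinuousOn p (Ici 0))
    (hpos : ∀ t, 0 ≤ t → 0 < p t) (hle : ∀ t, 0 ≤ t → p t ≤ 1)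
    (hint : IntegrableOn p (Ioi 0))
    (astar : ℝ → ℝ)
    (hsol : ∀ r, 0 < r → 0 < astar r ∧
      (∫ t in Ioi (astar r), Real.exp (-(r * t)) * p t) =
        r * ∫ t in (0 : ℝ)..(astar r), Real.exp (-(r * t)) * (astar r - t) * p t)
    (huniq : ∀ r, 0 < r → ∀ α, 0 < α →
      ((∫ t in Ioi α, Real.exp (-(r * t)) * p t) =
        r * ∫ t in (0 : ℝ)..α, Real.exp (-(r * t)) * (α - t) * p t) → α = astar r) :
    ∀ r₁ r₂, 0 < r₁ → r₁ < r₂ → astar r₂ < astar r₁ := by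
  intro r₁ r₂ hr₁ hlt
  have hr₂ : 0 < r₂ := hr₁.trans hlt
  obtain ⟨ha1, heq1⟩ := hsol r₁ hr₁
  set a := astar r₁ with ha_def
  have h0a : (0:ℝ) ≤ a := ha1.le
  set c : ℝ := Real.exp (-((r₂ - r₁) * a)) with hc_def
  have hc : 0 < c := Real.exp_pos _
  -- interval integrals
  set J₁ : ℝ := ∫ t in (0:ℝ)..a, Real.exp (-(r₁ * t)) * (a - t) * p t with hJ1_def
  set J₂ : ℝ := ∫ t in (0:ℝ)..a, Real.exp (-(r₂ * t)) * (a - t) * p t with hJ2_def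
  -- continuity of integrands on [0, a]
  have hpcontI : ∀ {b : ℝ}, 0 ≤ b → ContinuousOn p (Icc 0 b) := fun hb =>
    hcont.mono (Icc_subset_Ici_self)
  have hcontE : ∀ r : ℝ, Continuous (fun t : ℝ => Real.exp (-(r * t))) := fun r =>
    Real.continuous_exp.comp ((continuous_const.mul continuous_id).neg)
  have hII : ∀ (r b : ℝ), 0 ≤ b →
      IntervalIntegrable (fun t => Real.exp (-(r * t)) * (b - t) * p t) volume 0 b := by
    intro r b hb
    apply ContinuousOn.intervalIntegrable
    rw [uIcc_of_le hb]
    exact (((hcontE r).continuousOn.mul (continuous_const.sub continuous_id).continuousOn).mul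
      (hpcontI hb))
  -- Step (i): strict comparison of the tail integrals
  have stepF : (∫ t in Ioi a, Real.exp (-(r₂ * t)) * p t) <
      c * ∫ t in Ioi a, Real.exp (-(r₁ * t)) * p t := by
    have hint1 : IntegrableOn (fun t => Real.exp (-(r₁ * t)) * p t) (Ioi a) :=
      cria_int_aux hint hr₁.le h0a
    have hint2 : IntegrableOn (fun t => Real.exp (-(r₂ * t)) * p t) (Ioi a) :=
      cria_int_aux hint hr₂.le h0a
    have hgint : IntegrableOn
        (fun t => c * (Real.exp (-(r₁ * t)) * p t) - Real.exp (-(r₂ * t)) * p t) (Ioi a) :=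
      (hint1.const_mul c).sub hint2
    have hgpos : ∀ t ∈ Ioi a, 0 <
        c * (Real.exp (-(r₁ * t)) * p t) - Real.exp (-(r₂ * t)) * p t := by
      intro t ht
      have ht' : a < t := ht
      have htpos : 0 < p t := hpos t (h0a.trans ht'.le)
      have hexp : Real.exp (-(r₂ * t)) < c * Real.exp (-(r₁ * t)) := by
        rw [hc_def, ← Real.exp_add]
        apply Real.exp_lt_exp.2
        nlinarith
      nlinarith
    have hpos0 : 0 < ∫ t in Ioi a,
        (c * (Real.exp (-(r₁ * t)) * p t) - Real.exp (-(r₂ * t)) * p t) := by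
      rw [setIntegral_pos_iff_support_of_nonneg_ae ?_ hgint]
      · refine lt_of_lt_of_le ?_ (measure_mono (subset_inter ?_ Subset.rfl))
        · rw [Real.volume_Ioi]; exact ENNReal.zero_lt_top
        · intro t ht
          exact ne_of_gt (hgpos t ht)
      · refine (ae_restrict_iff' measurableSet_Ioi).2 (ae_of_all _ fun t ht => ?_)
        exact (hgpos t ht).le
    rw [integral_sub (hint1.const_mul c) hint2, integral_const_mul] at hpos0
    linarith
  -- Step (ii): comparison of the refund integrals
  have stepJ : c * J₁ ≤ J₂ := by
    have h1 : IntervalIntegrable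
        (fun t => c * (Real.exp (-(r₁ * t)) * (a - t) * p t)) volume 0 a :=
      (hII r₁ a h0a).const_mul c
    have h2 := hII r₂ a h0a
    have hmono : ∀ t ∈ Icc (0:ℝ) a,
        c * (Real.exp (-(r₁ * t)) * (a - t) * p t) ≤
          Real.exp (-(r₂ * t)) * (a - t) * p t := by
      intro t ht
      have htp : 0 ≤ p t := (hpos t ht.1).le
      have hat : 0 ≤ a - t := sub_nonneg.2 ht.2
      have hexp : c * Real.exp (-(r₁ * t)) ≤ Real.exp (-(r₂ * t)) := by
        rw [hc_def, ← Real.exp_add]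
        apply Real.exp_le_exp.2
        nlinarith [ht.1, ht.2, hlt.le]
      nlinarith [mul_nonneg hat htp]
    calc c * J₁ = ∫ t in (0:ℝ)..a, c * (Real.exp (-(r₁ * t)) * (a - t) * p t) := by
          rw [hJ1_def, intervalIntegral.integral_const_mul]
      _ ≤ J₂ := intervalIntegral.integral_mono_on h0a h1 h2 hmono
  have hJ1nonneg : 0 ≤ J₁ := by
    rw [hJ1_def]
    apply intervalIntegral.integral_nonneg h0a
    intro t ht
    have := (hpos t ht.1).le
    have hat : 0 ≤ a - t := sub_nonneg.2 ht.2
    positivity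
  -- Step A: Φ₂ a < 0
  have stepA : (∫ t in Ioi a, Real.exp (-(r₂ * t)) * p t) < r₂ * J₂ := by
    rw [heq1] at stepF
    have e2 : 0 ≤ c * J₁ := mul_nonneg hc.le hJ1nonneg
    have e3 : r₁ * (c * J₁) ≤ r₂ * (c * J₁) := mul_le_mul_of_nonneg_right hlt.le e2
    have e4 : r₂ * (c * J₁) ≤ r₂ * J₂ := mul_le_mul_of_nonneg_left stepJ hr₂.le
    have e5 : c * (r₁ * J₁) = r₁ * (c * J₁) := by ring
    linarith
  -- representation of Φ on [0, a]
  set C : ℝ := ∫ t in Ioi (0:ℝ), Real.exp (-(r₂ * t)) * p t with hC_def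
  set P : ℝ → ℝ := fun α => ∫ t in (0:ℝ)..α, Real.exp (-(r₂ * t)) * p t with hP_def
  set Q : ℝ → ℝ := fun α => ∫ t in (0:ℝ)..α, t * (Real.exp (-(r₂ * t)) * p t) with hQ_def
  set Φ : ℝ → ℝ := fun α => (∫ t in Ioi α, Real.exp (-(r₂ * t)) * p t) -
      r₂ * ∫ t in (0:ℝ)..α, Real.exp (-(r₂ * t)) * (α - t) * p t with hΦ_def
  have hEpIcc : ∀ {b : ℝ}, 0 ≤ b →
      ContinuousOn (fun t => Real.exp (-(r₂ * t)) * p t) (Icc 0 b) := fun hb =>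
    (hcontE r₂).continuousOn.mul (hpcontI hb)
  have htail : ∀ α : ℝ, 0 ≤ α →
      (∫ t in Ioi α, Real.exp (-(r₂ * t)) * p t) = C - P α := by
    intro α hα
    have hi1 : IntegrableOn (fun t => Real.exp (-(r₂ * t)) * p t) (Ioc 0 α) :=
      ((hEpIcc hα).integrableOn_Icc).mono_set Ioc_subset_Icc_self
    have hi2 : IntegrableOn (fun t => Real.exp (-(r₂ * t)) * p t) (Ioi α) :=
      cria_int_aux hint hr₂.le hα
    have hsplit : C = P α + ∫ t in Ioi α, Real.exp (-(r₂ * t)) * p t := by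
      rw [hC_def, hP_def]
      simp only
      rw [intervalIntegral.integral_of_le hα, ← setIntegral_union Ioc_disjoint_Ioi_same
        measurableSet_Ioi hi1 hi2, Ioc_union_Ioi_eq_Ioi hα]
    linarith
  have hrefund : ∀ α : ℝ, 0 ≤ α →
      (∫ t in (0:ℝ)..α, Real.exp (-(r₂ * t)) * (α - t) * p t) = α * P α - Q α := by
    intro α hα
    have hiP : IntervalIntegrable (fun t => α * (Real.exp (-(r₂ * t)) * p t)) volume 0 α := by
      apply ContinuousOn.intervalIntegrable
      rw [uIcc_of_le hα]
      exact continuousOn_const.mul (hEpIcc hα)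
    have hiQ : IntervalIntegrable (fun t => t * (Real.exp (-(r₂ * t)) * p t)) volume 0 α := by
      apply ContinuousOn.intervalIntegrable
      rw [uIcc_of_le hα]
      exact continuousOn_id.mul (hEpIcc hα)
    have hrw : ∀ t : ℝ, Real.exp (-(r₂ * t)) * (α - t) * p t =
        α * (Real.exp (-(r₂ * t)) * p t) - t * (Real.exp (-(r₂ * t)) * p t) := fun t => by ring
    simp_rw [hrw]
    rw [intervalIntegral.integral_sub hiP hiQ, intervalIntegral.integral_const_mul]

  have hΦcont : ContinuousOn Φ (Icc 0 a) := by
    have hPcont : ContinuousOn P (Icc 0 a) := by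
      rw [hP_def, ← uIcc_of_le h0a]
      apply intervalIntegral.continuousOn_primitive_interval
      rw [uIcc_of_le h0a]
      exact (hEpIcc h0a).integrableOn_Icc
    have hQcont : ContinuousOn Q (Icc 0 a) := by
      rw [hQ_def, ← uIcc_of_le h0a]
      apply intervalIntegral.continuousOn_primitive_interval
      rw [uIcc_of_le h0a]
      exact (continuousOn_id.mul (hEpIcc h0a)).integrableOn_Icc
    have hrhs : ContinuousOn (fun α => C - P α - r₂ * (α * P α - Q α)) (Icc 0 a) :=
      (continuousOn_const.sub hPcont).sub
        (continuousOn_const.mul ((continuousOn_id.mul hPcont).sub hQcont))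
    apply hrhs.congr
    intro α hα
    rw [hΦ_def]
    simp only
    rw [htail α hα.1, hrefund α hα.1]
  have hΦ0 : 0 < Φ 0 := by
    have h00 : Φ 0 = C := by
      rw [hΦ_def]
      simp only
      rw [intervalIntegral.integral_same, mul_zero, sub_zero, hC_def]
    rw [h00, hC_def]
    have hi : IntegrableOn (fun t => Real.exp (-(r₂ * t)) * p t) (Ioi 0) :=
      cria_int_aux hint hr₂.le le_rfl
    rw [setIntegral_pos_iff_support_of_nonneg_ae ?_ hi]
    · refine lt_of_lt_of_le ?_ (measure_mono (subset_inter ?_ Subset.rfl))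
      · rw [Real.volume_Ioi]; exact ENNReal.zero_lt_top
      · intro t ht
        have : 0 < Real.exp (-(r₂ * t)) * p t :=
          mul_pos (Real.exp_pos _) (hpos t (le_of_lt ht))
        exact ne_of_gt this
    · refine (ae_restrict_iff' measurableSet_Ioi).2 (ae_of_all _ fun t ht => ?_)
      exact (mul_pos (Real.exp_pos _) (hpos t (le_of_lt ht))).le
  have hΦa : Φ a < 0 := by
    rw [hΦ_def]
    simp only
    rw [← hJ2_def]
    linarith
  have hIVT := intermediate_value_Ioo' h0a hΦcont
  obtain ⟨β, hβmem, hβ0⟩ := hIVT ⟨hΦa, hΦ0⟩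
  have hβeq : β = astar r₂ := by
    apply huniq r₂ hr₂ β hβmem.1
    have : Φ β = 0 := hβ0
    rw [hΦ_def] at this
    simp only at this
    linarith [this]
  rw [← hβeq]
  exact hβmem.2
end

section
/- Let p:[0,∞)→(0,1] be a strictly decreasing continuous survival function. For any r>0 and α>0, ∂G(α;r)/∂r > 0, where G(α;r)=r∫_0^α e^{-rt}(α−t)p(t)dt; equivalently, ∫_0^α e^{-rt}(α−t)(1−rt)p(t)dt > 0 for all α>0 (not just α<1/r). -/
open MeasureTheory Set Filter

theorem G_partial_r_pos
    (p : ℝ → ℝ)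
    (hanti : StrictAntiOn p (Ici 0))
    (hcont : ContinuousOn p (Ici 0))
    (hpos : ∀ t, 0 ≤ t → 0 < p t) (hle : ∀ t, 0 ≤ t → p t ≤ 1) :
    ∀ r α : ℝ, 0 < r → 0 < α →
      0 < ∫ t in (0 : ℝ)..α, Real.exp (-(r * t)) * (α - t) * (1 - r * t) * p t := by
  intro r α hr hα
  have hrne : r ≠ 0 := ne_of_gt hr
  set b : ℝ := p (1 / r) with hb_def
  have hrinv : (0:ℝ) ≤ 1 / r := by positivity
  have hb : 0 < b := hpos _ hrinv
  -- the auxiliary function f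
  set f : ℝ → ℝ := fun t => Real.exp (-(r * t)) * (α - t) * (1 - r * t) with hf_def
  have hfcont : Continuous f := by
    apply Continuous.mul
    apply Continuous.mul
    · exact (continuous_const.mul continuous_id).neg.rexp
    · exact continuous_const.sub continuous_id
    · exact continuous_const.sub (continuous_const.mul continuous_id)
  -- antiderivative
  have hF : ∀ t ∈ uIcc (0:ℝ) α,
      HasDerivAt (fun t => Real.exp (-(r * t)) * (-(1/r^2) + (α - 1/r) * t - t^2)) (f t) t := by
    intro t _
    have h1 : HasDerivAt (fun t : ℝ => -(r * t)) (-r) t := by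
      exact ((hasDerivAt_id t).const_mul r).neg.congr_deriv (by simp)
    have h2 : HasDerivAt (fun t : ℝ => Real.exp (-(r * t))) (Real.exp (-(r * t)) * (-r)) t :=
      h1.exp
    have h3 : HasDerivAt (fun t : ℝ => -(1/r^2) + (α - 1/r) * t - t^2) ((α - 1/r) - 2 * t) t := by
      have ha := ((hasDerivAt_id t).const_mul (α - 1/r)).const_add (-(1/r^2))
      have hb2 := hasDerivAt_pow 2 t
      exact (ha.sub hb2).congr_deriv (by simp)
    have := h2.mul h3
    refine this.congr_deriv ?_
    show _ = Real.exp (-(r * t)) * (α - t) * (1 - r * t)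
    field_simp
    ring
  have hfint : (∫ t in (0:ℝ)..α, f t)
      = Real.exp (-(r * α)) * (-(1/r^2) + (α - 1/r) * α - α^2) - (-(1/r^2)) := by
    have := intervalIntegral.integral_eq_sub_of_hasDerivAt hF
      (hfcont.intervalIntegrable 0 α)
    simpa using this
  -- positivity of ∫ f
  have hkey : 1 + r * α < Real.exp (r * α) := by
    have := Real.add_one_lt_exp (x := r * α) (by positivity)
    linarith
  have he : Real.exp (-(r * α)) * Real.exp (r * α) = 1 := by
    rw [← Real.exp_add]; simp
  have hepos : 0 < Real.exp (-(r * α)) := Real.exp_pos _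
  have hIpos : 0 < ∫ t in (0:ℝ)..α, f t := by
    rw [hfint]
    have h5 : 0 < Real.exp (-(r * α)) * (Real.exp (r * α) - (1 + r * α)) :=
      mul_pos hepos (by linarith)
    have heq : Real.exp (-(r * α)) * (-(1/r^2) + (α - 1/r) * α - α^2) - (-(1/r^2))
        = (1 - Real.exp (-(r * α)) * (1 + r * α)) / r^2 := by
      field_simp
      ring
    rw [heq]
    apply div_pos
    · nlinarith [h5, he]
    · positivity
  -- pointwise bound
  have hmono : ∀ t ∈ Icc (0:ℝ) α, b * f t ≤ f t * p t := by
    intro t ht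
    have htmem : t ∈ Ici (0:ℝ) := ht.1
    have hrmem : (1/r : ℝ) ∈ Ici (0:ℝ) := hrinv
    have hexp : (0:ℝ) ≤ Real.exp (-(r * t)) := (Real.exp_pos _).le
    have hαt : (0:ℝ) ≤ α - t := by linarith [ht.2]
    rcases le_or_gt t (1/r) with hcase | hcase
    · have hp : b ≤ p t := (hanti.le_iff_ge hrmem htmem).mpr hcase
      have h1rt : 0 ≤ 1 - r * t := by
        have : r * t ≤ r * (1/r) := by exact mul_le_mul_of_nonneg_left hcase hr.le
        rw [mul_one_div, div_self hrne] at this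
        linarith
      have hfnn : 0 ≤ Real.exp (-(r * t)) * (α - t) * (1 - r * t) :=
        mul_nonneg (mul_nonneg hexp hαt) h1rt
      simp only [hf_def]
      nlinarith [mul_nonneg hfnn (sub_nonneg.2 hp)]
    · have hp : p t ≤ b := (hanti hrmem htmem hcase).le
      have h1rt : r * t - 1 ≥ 0 := by
        have : r * (1/r) ≤ r * t := mul_le_mul_of_nonneg_left hcase.le hr.le
        rw [mul_one_div, div_self hrne] at this
        linarith
      simp only [hf_def]
      nlinarith [mul_nonneg (mul_nonneg (mul_nonneg hexp hαt) h1rt) (sub_nonneg.2 hp)]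
  -- integrability
  have hint1 : IntervalIntegrable (fun t => b * f t) volume 0 α :=
    (continuous_const.mul hfcont).intervalIntegrable 0 α
  have hint2 : IntervalIntegrable (fun t => f t * p t) volume 0 α := by
    apply ContinuousOn.intervalIntegrable
    apply ContinuousOn.mul hfcont.continuousOn
    apply hcont.mono
    rw [uIcc_of_le hα.le]
    exact fun x hx => hx.1
  have hle2 : (∫ t in (0:ℝ)..α, b * f t) ≤ ∫ t in (0:ℝ)..α, f t * p t := by
    apply intervalIntegral.integral_mono_on hα.le hint1 hint2 hmono
  have hbf : (∫ t in (0:ℝ)..α, b * f t) = b * ∫ t in (0:ℝ)..α, f t := by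
    exact intervalIntegral.integral_const_mul b f
  have : 0 < ∫ t in (0:ℝ)..α, f t * p t := by
    calc 0 < b * ∫ t in (0:ℝ)..α, f t := mul_pos hb hIpos
    _ = ∫ t in (0:ℝ)..α, b * f t := hbf.symm
    _ ≤ _ := hle2
  simpa [hf_def] using this
end

section
/- Under the setting of an increasing hazard rate λ with λ(x)→∞ as x→∞, the fair unloaded cash-refund annuity price a*(x) tends to 0 as x→∞. -/
open MeasureTheory Set Filter

private lemma exp_deriv_aux (s t : ℝ) (hs : s ≠ 0) :
    HasDerivAt (fun t => -Real.exp (-(s * t)) / s) (Real.exp (-(s * t))) t := by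
  have h1 : HasDerivAt (fun t : ℝ => -(s * t)) (-s) t := by
    have := ((hasDerivAt_id t).const_mul s).neg
    simp only [id, mul_one] at this
    exact this
  have h2 := h1.exp
  have h3 : HasDerivAt (fun t => -Real.exp (-(s * t)) / s) (-(Real.exp (-(s * t)) * -s) / s) t :=
    (h2.neg).div_const s
  convert h3 using 1
  field_simp

private lemma int_exp_Ioi (s a : ℝ) (hs : 0 < s) :
    ∫ t in Ioi a, Real.exp (-(s * t)) = Real.exp (-(s * a)) / s := by
  have hi : IntegrableOn (fun t => Real.exp (-(s * t))) (Ioi a) := by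
    simpa [neg_mul] using exp_neg_integrableOn_Ioi a hs
  have hbot : Tendsto (fun t : ℝ => -(s * t)) atTop atBot := by
    have : Tendsto (fun t : ℝ => s * t) atTop atTop :=
      (tendsto_id (α := ℝ) (x := atTop)).const_mul_atTop hs
    exact tendsto_neg_atBot_iff.mpr this
  have htend : Tendsto (fun t => -Real.exp (-(s * t)) / s) atTop (nhds 0) := by
    have h0 : Tendsto (fun t => Real.exp (-(s * t))) atTop (nhds 0) :=
      Real.tendsto_exp_atBot.comp hbot
    have := (h0.neg).div_const s
    simpa using this
  have := integral_Ioi_of_hasDerivAt_of_tendsto'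
    (fun t _ => exp_deriv_aux s t hs.ne') hi htend
  rw [this]; ring

private lemma int_exp_interval (s a b : ℝ) (hs : s ≠ 0) :
    ∫ t in a..b, Real.exp (-(s * t)) =
      (Real.exp (-(s * a)) - Real.exp (-(s * b))) / s := by
  have := intervalIntegral.integral_eq_sub_of_hasDerivAt
    (f := fun t => -Real.exp (-(s * t)) / s) (f' := fun t => Real.exp (-(s * t)))
    (a := a) (b := b) (fun t _ => exp_deriv_aux s t hs)
    ((Real.continuous_exp.comp ((continuous_const.mul continuous_id).neg)).intervalIntegrable a b)
  rw [this]; ring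

set_option maxHeartbeats 1000000 in
theorem cria_price_tendsto_zero_at_advanced_ages
    (r : ℝ) (hr : 0 < r)
    (lam : ℝ → ℝ) (hlamcont : Continuous lam) (hlampos : ∀ x, 0 < lam x)
    (hlammono : Monotone lam)
    (hlamtop : Tendsto lam atTop atTop)
    (p : ℝ → ℝ → ℝ)
    (hp : ∀ x t, p x t = Real.exp (-(∫ s in (0 : ℝ)..t, lam (x + s))))
    (astar : ℝ → ℝ)
    (hsol : ∀ x, 0 < astar x ∧
      (∫ t in Ioi (astar x), Real.exp (-(r * t)) * p x t) =
        r * ∫ t in (0 : ℝ)..(astar x), Real.exp (-(r * t)) * (astar x - t) * p x t) :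
    Tendsto astar atTop (nhds 0) := by
  -- basic facts about p
  have hppos : ∀ x t, 0 < p x t := fun x t => by rw [hp]; exact Real.exp_pos _
  have hIcont : ∀ x : ℝ, Continuous fun t => ∫ s in (0 : ℝ)..t, lam (x + s) := by
    intro x
    exact intervalIntegral.continuous_primitive
      (fun a b => ((hlamcont.comp (continuous_const.add continuous_id)).intervalIntegrable a b)) 0
  have hpcont : ∀ x : ℝ, Continuous fun t => p x t := by
    intro x
    have : (fun t => p x t) = fun t => Real.exp (-(∫ s in (0 : ℝ)..t, lam (x + s))) := by
      funext t; exact hp x t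
    rw [this]
    exact Real.continuous_exp.comp (hIcont x).neg
  -- p x t ≤ 1 for t ≥ 0
  have hple1 : ∀ x t, 0 ≤ t → p x t ≤ 1 := by
    intro x t ht
    rw [hp]
    rw [show (1 : ℝ) = Real.exp 0 by simp]
    apply Real.exp_le_exp.2
    simp only [neg_nonpos]
    exact intervalIntegral.integral_nonneg ht (fun u _ => (hlampos _).le)
  -- integrability of the F integrand on Ioi a, a ≥ 0
  have hIntF : ∀ x a : ℝ, 0 ≤ a →
      IntegrableOn (fun t => Real.exp (-(r * t)) * p x t) (Ioi a) := by
    intro x a ha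
    apply Integrable.mono' (g := fun t => Real.exp (-(r * t)))
    · simpa [neg_mul, IntegrableOn] using exp_neg_integrableOn_Ioi a hr
    · exact ((Real.continuous_exp.comp ((continuous_const.mul continuous_id).neg)).mul
        (hpcont x)).aestronglyMeasurable
    · filter_upwards [ae_restrict_mem measurableSet_Ioi] with t ht
      have ht0 : (0 : ℝ) ≤ t := le_trans ha (le_of_lt ht)
      rw [Real.norm_eq_abs, abs_of_pos (mul_pos (Real.exp_pos _) (hppos x t))]
      nth_rewrite 2 [show Real.exp (-(r * t)) = Real.exp (-(r * t)) * 1 by ring]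
      exact mul_le_mul_of_nonneg_left (hple1 x t ht0) (Real.exp_pos _).le
  refine tendsto_order.2 ⟨fun a ha => Eventually.of_forall fun x => lt_trans ha (hsol x).1,
    fun ε hε => ?_⟩
  -- eventual smallness conditions
  have hLtop : Tendsto (fun x => Real.exp (-(lam x * ε))) atTop (nhds 0) := by
    apply Real.tendsto_exp_atBot.comp
    exact tendsto_neg_atBot_iff.mpr (hlamtop.atTop_mul_const hε)
  have hMtop : Tendsto (fun x => lam (x + ε)) atTop atTop :=
    hlamtop.comp (tendsto_atTop_add_const_right atTop ε tendsto_id)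
  have hstop : Tendsto (fun x => Real.exp (-((r + lam (x + ε)) * (ε / 2)))) atTop (nhds 0) := by
    apply Real.tendsto_exp_atBot.comp
    apply tendsto_neg_atBot_iff.mpr
    exact (tendsto_atTop_add_const_left atTop r hMtop).atTop_mul_const (by linarith)
  filter_upwards [hLtop.eventually_lt_const (show (0:ℝ) < r * ε / 4 by positivity),
    hstop.eventually_le_const (show (0:ℝ) < 1/2 by norm_num)] with x h1 h2
  -- notation
  set L := lam x with hL
  set M := lam (x + ε) with hM
  set s := r + M with hs
  have hM0 : 0 < M := hlampos _
  have hs0 : 0 < s := by positivity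
  -- comparison of the hazard integral
  have hlamint : ∀ a b : ℝ, IntervalIntegrable (fun u => lam (x + u)) volume a b :=
    fun a b => (hlamcont.comp (continuous_const.add continuous_id)).intervalIntegrable a b
  have hint1 : ∀ t, ε ≤ t → L * ε + M * (t - ε) ≤ ∫ u in (0 : ℝ)..t, lam (x + u) := by
    intro t ht
    have hsplit : (∫ u in (0 : ℝ)..ε, lam (x + u)) + ∫ u in ε..t, lam (x + u)
        = ∫ u in (0 : ℝ)..t, lam (x + u) :=
      intervalIntegral.integral_add_adjacent_intervals (hlamint 0 ε) (hlamint ε t)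
    rw [← hsplit]
    have hb1 : L * ε ≤ ∫ u in (0 : ℝ)..ε, lam (x + u) := by
      have := intervalIntegral.integral_mono_on (μ := volume) hε.le
        (intervalIntegrable_const (c := L)) (hlamint 0 ε)
        (fun u hu => hlammono (by linarith [hu.1]))
      simpa [mul_comm] using this
    have hb2 : M * (t - ε) ≤ ∫ u in ε..t, lam (x + u) := by
      have := intervalIntegral.integral_mono_on (μ := volume) ht
        (intervalIntegrable_const (c := M)) (hlamint ε t)
        (fun u hu => hlammono (by linarith [hu.1]))
      simpa [mul_comm] using this
    linarith
  have hint2 : ∀ t, 0 ≤ t → t ≤ ε → (∫ u in (0 : ℝ)..t, lam (x + u)) ≤ M * t := by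
    intro t ht0 htε
    have := intervalIntegral.integral_mono_on (μ := volume) ht0
      (hlamint 0 t) (intervalIntegrable_const (c := M))
      (fun u hu => hlammono (by linarith [hu.2]))
    simpa [mul_comm] using this
  -- upper bound on F ε
  have hFbound : (∫ t in Ioi ε, Real.exp (-(r * t)) * p x t) ≤ Real.exp (-(L * ε)) / s := by
    have hpt : ∀ t ∈ Ioi ε, Real.exp (-(r * t)) * p x t
        ≤ Real.exp ((M - L) * ε) * Real.exp (-(s * t)) := by
      intro t ht
      rw [hp, ← Real.exp_add, ← Real.exp_add]
      apply Real.exp_le_exp.2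
      have := hint1 t (le_of_lt ht)
      simp only [hs]
      nlinarith
    have hiRHS : IntegrableOn (fun t => Real.exp ((M - L) * ε) * Real.exp (-(s * t)))
        (Ioi ε) := by
      apply Integrable.const_mul
      simpa [neg_mul, IntegrableOn] using exp_neg_integrableOn_Ioi ε hs0
    calc (∫ t in Ioi ε, Real.exp (-(r * t)) * p x t)
        ≤ ∫ t in Ioi ε, Real.exp ((M - L) * ε) * Real.exp (-(s * t)) := by
          apply setIntegral_mono_on (hIntF x ε hε.le) hiRHS measurableSet_Ioi hpt
      _ = Real.exp ((M - L) * ε) * (Real.exp (-(s * ε)) / s) := by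
          rw [integral_const_mul, int_exp_Ioi s ε hs0]
      _ = Real.exp ((M - L) * ε + -(s * ε)) / s := by
          rw [← mul_div_assoc, ← Real.exp_add]
      _ ≤ Real.exp (-(L * ε)) / s := by
          gcongr
          nlinarith
  -- interval integrability of the G integrand
  have hGint : ∀ a b c : ℝ,
      IntervalIntegrable (fun t => Real.exp (-(r * t)) * (c - t) * p x t) volume a b := by
    intro a b c
    exact (((Real.continuous_exp.comp ((continuous_const.mul continuous_id).neg)).mul
      (continuous_const.sub continuous_id)).mul (hpcont x)).intervalIntegrable a b
  -- lower bound on G ε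
  have hGbound : r * (ε / (4 * s)) ≤
      r * ∫ t in (0 : ℝ)..ε, Real.exp (-(r * t)) * (ε - t) * p x t := by
    apply mul_le_mul_of_nonneg_left _ hr.le
    have hsplit : (∫ t in (0 : ℝ)..(ε/2), Real.exp (-(r * t)) * (ε - t) * p x t)
        + ∫ t in (ε/2)..ε, Real.exp (-(r * t)) * (ε - t) * p x t
        = ∫ t in (0 : ℝ)..ε, Real.exp (-(r * t)) * (ε - t) * p x t :=
      intervalIntegral.integral_add_adjacent_intervals (hGint 0 (ε/2) ε) (hGint (ε/2) ε ε)
    have htail : 0 ≤ ∫ t in (ε/2)..ε, Real.exp (-(r * t)) * (ε - t) * p x t := by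
      apply intervalIntegral.integral_nonneg (by linarith)
      intro u hu
      have h1 : (0:ℝ) ≤ ε - u := by linarith [hu.2]
      have := (hppos x u).le
      positivity
    have hmain : (∫ t in (0 : ℝ)..(ε/2), (ε/2) * Real.exp (-(s * t)))
        ≤ ∫ t in (0 : ℝ)..(ε/2), Real.exp (-(r * t)) * (ε - t) * p x t := by
      have hci : IntervalIntegrable (fun t => (ε/2) * Real.exp (-(s * t))) volume 0 (ε/2) :=
        (continuous_const.mul
          (Real.continuous_exp.comp ((continuous_const.mul continuous_id).neg))).intervalIntegrable _ _
      apply intervalIntegral.integral_mono_on (by linarith) hci (hGint 0 (ε/2) ε)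
      intro t ht
      have hpge : Real.exp (-(M * t)) ≤ p x t := by
        rw [hp]
        exact Real.exp_le_exp.2 (neg_le_neg (hint2 t ht.1 (by linarith [ht.2])))
      have heq2 : (ε/2) * Real.exp (-(s * t))
          = Real.exp (-(r * t)) * (ε/2) * Real.exp (-(M * t)) := by
        rw [mul_comm (Real.exp (-(r * t))) (ε/2), mul_assoc, ← Real.exp_add]
        simp only [hs]; ring_nf
      rw [heq2]
      have hle1 : ε/2 ≤ ε - t := by linarith [ht.2]
      exact mul_le_mul (mul_le_mul_of_nonneg_left hle1 (Real.exp_pos _).le) hpge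
        (Real.exp_pos _).le (mul_nonneg (Real.exp_pos _).le (by linarith [ht.2]))
    have hcomp : ε / (4 * s) ≤ ∫ t in (0 : ℝ)..(ε/2), (ε/2) * Real.exp (-(s * t)) := by
      rw [intervalIntegral.integral_const_mul, int_exp_interval s 0 (ε/2) hs0.ne']
      have h2' : Real.exp (-(s * (ε/2))) ≤ 1/2 := h2
      rw [show -(s * (0:ℝ)) = 0 by ring, Real.exp_zero]
      have h4 : ε / (4 * s) = ε/2 * ((1/2) / s) := by
        field_simp
        norm_num
      rw [h4]
      gcongr
      linarith
    linarith
  -- conclude : astar x < ε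
  by_contra hcon
  push_neg at hcon
  obtain ⟨hpos, heq⟩ := hsol x
  have hFmono : (∫ t in Ioi (astar x), Real.exp (-(r * t)) * p x t)
      ≤ ∫ t in Ioi ε, Real.exp (-(r * t)) * p x t := by
    apply setIntegral_mono_set (hIntF x ε hε.le)
    · filter_upwards [ae_restrict_mem measurableSet_Ioi] with t ht
      exact (mul_pos (Real.exp_pos _) (hppos x t)).le
    · exact HasSubset.Subset.eventuallyLE (Ioi_subset_Ioi hcon)
  have hGmono : (r * ∫ t in (0 : ℝ)..ε, Real.exp (-(r * t)) * (ε - t) * p x t)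
      ≤ r * ∫ t in (0 : ℝ)..(astar x), Real.exp (-(r * t)) * (astar x - t) * p x t := by
    apply mul_le_mul_of_nonneg_left _ hr.le
    have hstep1 : (∫ t in (0 : ℝ)..ε, Real.exp (-(r * t)) * (ε - t) * p x t)
        ≤ ∫ t in (0 : ℝ)..ε, Real.exp (-(r * t)) * (astar x - t) * p x t := by
      apply intervalIntegral.integral_mono_on hε.le (hGint 0 ε ε) (hGint 0 ε (astar x))
      intro t ht
      have := (hppos x t).le
      have h3 : ε - t ≤ astar x - t := by linarith
      have h4 : (0:ℝ) ≤ ε - t := by linarith [ht.2]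
      have h5 := (Real.exp_pos (-(r * t))).le
      exact mul_le_mul_of_nonneg_right (mul_le_mul_of_nonneg_left h3 h5) (hppos x t).le
    have hsplit2 : (∫ t in (0 : ℝ)..ε, Real.exp (-(r * t)) * (astar x - t) * p x t)
        + ∫ t in ε..(astar x), Real.exp (-(r * t)) * (astar x - t) * p x t
        = ∫ t in (0 : ℝ)..(astar x), Real.exp (-(r * t)) * (astar x - t) * p x t :=
      intervalIntegral.integral_add_adjacent_intervals (hGint 0 ε (astar x))
        (hGint ε (astar x) (astar x))
    have htail2 : 0 ≤ ∫ t in ε..(astar x), Real.exp (-(r * t)) * (astar x - t) * p x t := by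
      apply intervalIntegral.integral_nonneg hcon
      intro u hu
      have h1 : (0:ℝ) ≤ astar x - u := by linarith [hu.2]
      have := (hppos x u).le
      positivity
    linarith
  -- the contradiction
  have hnum : Real.exp (-(L * ε)) / s < r * (ε / (4 * s)) := by
    have h6 : r * (ε / (4 * s)) = (r * ε / 4) / s := by
      field_simp
    rw [h6]
    exact (div_lt_div_iff_of_pos_right hs0).mpr h1
  linarith
end

section
/- Let r>0 and let p be a decreasing survival function with the usual integrability. For the fair unloaded cash-refund price a*(x) at age x (hazard rate λ increasing), the expiry age y(x) = x + a*(x) is strictly increasing in x. -/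
open MeasureTheory Set Filter

namespace CriaAux

/-- Cumulative hazard from 0. -/
noncomputable def Lp (lam : ℝ → ℝ) (u : ℝ) : ℝ := ∫ s in (0:ℝ)..u, lam s

/-- The "absolute" discounted survival density `e^{-ru} q(u)`. -/
noncomputable def ff (r : ℝ) (lam : ℝ → ℝ) (u : ℝ) : ℝ :=
  Real.exp (-(r * u) - Lp lam u)

lemma Lp_cont {lam : ℝ → ℝ} (h : Continuous lam) : Continuous (Lp lam) :=
  intervalIntegral.continuous_primitive (fun a b => h.intervalIntegrable a b) 0

lemma Lp_sub {lam : ℝ → ℝ} (h : Continuous lam) (a b : ℝ) :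
    Lp lam b - Lp lam a = ∫ s in a..b, lam s := by
  unfold Lp
  rw [intervalIntegral.integral_interval_sub_left (h.intervalIntegrable 0 b)
    (h.intervalIntegrable 0 a)]

lemma Lp_mono {lam : ℝ → ℝ} (h : Continuous lam) (hpos : ∀ x, 0 < lam x) :
    Monotone (Lp lam) := by
  intro a b hab
  have h1 : Lp lam b - Lp lam a = ∫ s in a..b, lam s := Lp_sub h a b
  have h2 : 0 ≤ ∫ s in a..b, lam s :=
    intervalIntegral.integral_nonneg hab (fun u _ => (hpos u).le)
  linarith

lemma ff_cont {r : ℝ} {lam : ℝ → ℝ} (h : Continuous lam) : Continuous (ff r lam) :=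
  Real.continuous_exp.comp ((continuous_const.mul continuous_id).neg.sub (Lp_cont h))

lemma ff_pos (r : ℝ) (lam : ℝ → ℝ) (u : ℝ) : 0 < ff r lam u := Real.exp_pos _

lemma ff_int {r : ℝ} {lam : ℝ → ℝ} (hr : 0 < r) (hc : Continuous lam)
    (hpos : ∀ x, 0 < lam x) (y : ℝ) : IntegrableOn (ff r lam) (Ioi y) := by
  have hg : IntegrableOn (fun u => Real.exp (-Lp lam y) * Real.exp (-r * u)) (Ioi y) :=
    (exp_neg_integrableOn_Ioi y hr).const_mul _
  refine hg.mono' ((ff_cont hc).aestronglyMeasurable.restrict) ?_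
  filter_upwards [ae_restrict_mem measurableSet_Ioi] with u hu
  have hL : Lp lam y ≤ Lp lam u := Lp_mono hc hpos (le_of_lt hu)
  rw [Real.norm_eq_abs, abs_of_pos (ff_pos r lam u), ff, ← Real.exp_add]
  apply Real.exp_le_exp.2
  nlinarith

end CriaAux

open CriaAux

theorem cria_expiry_age_strict_mono
    (r : ℝ) (hr : 0 < r)
    (lam : ℝ → ℝ) (hlamcont : Continuous lam) (hlampos : ∀ x, 0 < lam x)
    (hlammono : Monotone lam)
    (p : ℝ → ℝ → ℝ)
    (hp : ∀ x t, p x t = Real.exp (-(∫ s in (0 : ℝ)..t, lam (x + s))))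
    (astar : ℝ → ℝ)
    (hsol : ∀ x, 0 < astar x ∧
      (∫ t in Ioi (astar x), Real.exp (-(r * t)) * p x t) =
        r * ∫ t in (0 : ℝ)..(astar x), Real.exp (-(r * t)) * (astar x - t) * p x t) :
    StrictMono (fun x => x + astar x) := by
  set f : ℝ → ℝ := ff r lam with hf
  have hfc : Continuous f := ff_cont hlamcont
  have hfpos : ∀ u, 0 < f u := ff_pos r lam
  have hfint : ∀ y, IntegrableOn f (Ioi y) := ff_int hr hlamcont hlampos
  -- A and B
  set A : ℝ → ℝ := fun y => ∫ u in Ioi y, f u with hA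
  set B : ℝ → ℝ → ℝ := fun x y => ∫ u in x..y, (y - u) * f u with hB
  have hBic : ∀ (y : ℝ) (a b : ℝ),
      IntervalIntegrable (fun u => (y - u) * f u) volume a b :=
    fun y a b => ((continuous_const.sub continuous_id).mul hfc).intervalIntegrable a b
  -- pointwise identity
  have hpoint : ∀ x t, Real.exp (-(r * t)) * p x t
      = Real.exp (r * x + Lp lam x) * f (x + t) := by
    intro x t
    have h1 : (∫ s in (0:ℝ)..t, lam (x + s)) = Lp lam (x + t) - Lp lam x := by
      rw [intervalIntegral.integral_comp_add_left lam x, ← Lp_sub hlamcont]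
      norm_num
    rw [hp, h1, hf, ff, ← Real.exp_add, ← Real.exp_add]
    ring_nf
  -- transformed equation : A (x + astar x) = r * B x (x + astar x)
  have key : ∀ x, A (x + astar x) = r * B x (x + astar x) := by
    intro x
    have h0 := (hsol x).2
    set a := astar x with ha
    set C := Real.exp (r * x + Lp lam x) with hC
    -- left side
    have hL : (∫ t in Ioi a, Real.exp (-(r * t)) * p x t) = C * A (x + a) := by
      have h1 : (∫ t in Ioi a, Real.exp (-(r * t)) * p x t)
          = ∫ t in Ioi a, C * f (x + t) := by
        apply setIntegral_congr_fun measurableSet_Ioi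
        intro t _
        exact hpoint x t
      rw [h1, integral_const_mul]
      congr 1
      have hpre : (fun t => x + t) ⁻¹' (Ioi (x + a)) = Ioi a := by
        ext t; simp
      calc (∫ t in Ioi a, f (x + t))
          = ∫ t in (fun t => x + t) ⁻¹' (Ioi (x + a)), f (x + t) := by rw [hpre]
        _ = ∫ u in Ioi (x + a), f u :=
            (measurePreserving_add_left volume x).setIntegral_preimage_emb
              (measurableEmbedding_addLeft x) f (Ioi (x + a))
    -- right side
    have hR : (∫ t in (0:ℝ)..a, Real.exp (-(r * t)) * (a - t) * p x t)
        = C * B x (x + a) := by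
      have h1 : ∀ t, Real.exp (-(r * t)) * (a - t) * p x t
          = C * ((x + a - (x + t)) * f (x + t)) := by
        intro t
        have h2 := hpoint x t
        rw [← hC] at h2
        linear_combination (a - t) * h2
      calc (∫ t in (0:ℝ)..a, Real.exp (-(r * t)) * (a - t) * p x t)
          = ∫ t in (0:ℝ)..a, (fun u => C * ((x + a - u) * f u)) (x + t) := by
            apply intervalIntegral.integral_congr
            intro t _
            exact h1 t
        _ = ∫ u in (x+0)..(x+a), C * ((x + a - u) * f u) :=
            intervalIntegral.integral_comp_add_left (fun u => C * ((x + a - u) * f u)) x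
        _ = C * B x (x + a) := by
            rw [intervalIntegral.integral_const_mul]
            norm_num [hB]
    rw [hL, hR] at h0
    have hCpos : (0:ℝ) < C := Real.exp_pos _
    have : C * A (x + a) = C * (r * B x (x + a)) := by linarith
    exact mul_left_cancel₀ (ne_of_gt hCpos) this
  -- split lemma for A
  have hAsplit : ∀ y1 y2 : ℝ, y1 ≤ y2 → A y1 = (∫ u in y1..y2, f u) + A y2 := by
    intro y1 y2 h12
    have hunion : Ioc y1 y2 ∪ Ioi y2 = Ioi y1 := Ioc_union_Ioi_eq_Ioi h12
    have hdis : Disjoint (Ioc y1 y2) (Ioi y2) := Ioc_disjoint_Ioi le_rfl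
    have h1 : IntegrableOn f (Ioc y1 y2) := (hfint y1).mono_set Ioc_subset_Ioi_self
    have h2 := setIntegral_union hdis measurableSet_Ioi h1 (hfint y2)
    rw [hunion] at h2
    simp only [hA]
    rw [h2, intervalIntegral.integral_of_le h12]
  -- main argument
  intro x1 x2 hx
  by_contra hcon
  push_neg at hcon
  change x2 + astar x2 ≤ x1 + astar x1 at hcon
  set y1 := x1 + astar x1 with hy1
  set y2 := x2 + astar x2 with hy2
  have ha2 : 0 < astar x2 := (hsol x2).1
  have hx2y2 : x2 < y2 := by rw [hy2]; linarith
  have hx2y1 : x2 < y1 := lt_of_lt_of_le hx2y2 hcon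
  -- B x1 y1 > B x2 y1
  have hBsplit : B x1 y1 = (∫ u in x1..x2, (y1 - u) * f u) + B x2 y1 := by
    simp only [hB]
    rw [← intervalIntegral.integral_add_adjacent_intervals (hBic y1 x1 x2) (hBic y1 x2 y1)]
  have hmid : 0 < ∫ u in x1..x2, (y1 - u) * f u := by
    apply intervalIntegral.intervalIntegral_pos_of_pos_on (hBic y1 x1 x2) _ hx
    intro u hu
    have : u < y1 := lt_trans hu.2 hx2y1
    have := hfpos u
    nlinarith
  -- B x2 y2 ≤ B x2 y1
  have hBmono : B x2 y2 ≤ B x2 y1 := by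
    have hsplit2 : B x2 y1 = (∫ u in x2..y2, (y1 - u) * f u) + ∫ u in y2..y1, (y1 - u) * f u := by
      simp only [hB]
      rw [← intervalIntegral.integral_add_adjacent_intervals (hBic y1 x2 y2) (hBic y1 y2 y1)]
    have hm1 : B x2 y2 ≤ ∫ u in x2..y2, (y1 - u) * f u := by
      simp only [hB]
      apply intervalIntegral.integral_mono_on hx2y2.le (hBic y2 x2 y2) (hBic y1 x2 y2)
      intro u hu
      have := (hfpos u).le
      have : y2 - u ≤ y1 - u := by linarith [hcon]
      nlinarith [(hfpos u).le]
    have hm2 : 0 ≤ ∫ u in y2..y1, (y1 - u) * f u := by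
      apply intervalIntegral.integral_nonneg hcon
      intro u hu
      have := (hfpos u).le
      nlinarith [hu.2]
    linarith
  -- A y2 ≥ A y1
  have hAm : A y1 ≤ A y2 := by
    have := hAsplit y2 y1 hcon
    have hnn : 0 ≤ ∫ u in y2..y1, f u :=
      intervalIntegral.integral_nonneg hcon (fun u _ => (hfpos u).le)
    linarith
  have k1 := key x1
  have k2 := key x2
  rw [← hy1] at k1
  rw [← hy2] at k2
  nlinarith [hr, hmid, hBmono, hAm]
end

section
/- Let r>0, δ∈(0,1), and let p be a decreasing survival function with a_x := ∫_0^∞ e^{-rt}p(t)dt < ∞. With F(α)=∫_α^∞ e^{-rt}p(t)dt and G(α)=r∫_0^α e^{-rt}(α−t)p(t)dt: if δ ≥ r·a_x then there is no α>0 with δα + F(α) = G(α). -/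
open MeasureTheory Set Filter

theorem loaded_cria_nonviable
    (r δ : ℝ) (hr : 0 < r) (hδ0 : 0 < δ) (hδ1 : δ < 1)
    (p : ℝ → ℝ)
    (hanti : AntitoneOn p (Ici 0))
    (hcont : ContinuousOn p (Ici 0))
    (hpos : ∀ t, 0 ≤ t → 0 < p t) (hle : ∀ t, 0 ≤ t → p t ≤ 1)
    (hint : IntegrableOn (fun t => Real.exp (-(r * t)) * p t) (Ioi 0))
    (hδbig : r * (∫ t in Ioi 0, Real.exp (-(r * t)) * p t) ≤ δ) :
    ¬ ∃ α : ℝ, 0 < α ∧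
      δ * α + (∫ t in Ioi α, Real.exp (-(r * t)) * p t) =
        r * ∫ t in (0 : ℝ)..α, Real.exp (-(r * t)) * (α - t) * p t := by
  rintro ⟨α, hα, heq⟩
  set f : ℝ → ℝ := fun t => Real.exp (-(r * t)) * p t with hf
  have hαnn : (0:ℝ) ≤ α := hα.le
  -- F(α) > 0
  have hFpos : 0 < ∫ t in Ioi α, f t := by
    rw [setIntegral_pos_iff_support_of_nonneg_ae]
    · have hsub : Ioi α ⊆ Function.support f ∩ Ioi α := by
        intro t ht
        have ht0 : 0 ≤ t := le_trans hαnn (le_of_lt ht)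
        refine ⟨?_, ht⟩
        have := hpos t ht0
        simp only [Function.mem_support, hf]
        positivity
      have h0 : (0:ENNReal) < volume (Ioi α) := by
        rw [Real.volume_Ioi]; exact ENNReal.zero_lt_top
      exact lt_of_lt_of_le h0 (measure_mono hsub)
    · filter_upwards [ae_restrict_mem measurableSet_Ioi] with t ht
      have ht0 : 0 ≤ t := le_trans hαnn (le_of_lt ht)
      have := hpos t ht0
      simp only [hf, Pi.zero_apply]
      positivity
    · exact hint.mono_set (Ioi_subset_Ioi hαnn)
  -- continuity on Icc
  have hce : Continuous fun t : ℝ => Real.exp (-(r * t)) := by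
    exact Real.continuous_exp.comp (continuous_const.mul continuous_id).neg
  have hcf : ContinuousOn f (Icc 0 α) :=
    hce.continuousOn.mul (hcont.mono Icc_subset_Ici_self)
  have hcg : ContinuousOn (fun t => Real.exp (-(r * t)) * (α - t) * p t) (Icc 0 α) :=
    (hce.continuousOn.mul (continuous_const.sub continuous_id).continuousOn).mul
      (hcont.mono Icc_subset_Ici_self)
  have huIcc : uIcc (0:ℝ) α = Icc 0 α := uIcc_of_le hαnn
  -- step 1 : G/r ≤ α * ∫_0^α f
  have h1 : (∫ t in (0:ℝ)..α, Real.exp (-(r * t)) * (α - t) * p t)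
      ≤ ∫ t in (0:ℝ)..α, α * f t := by
    apply intervalIntegral.integral_mono_on hαnn
    · exact (huIcc ▸ hcg).intervalIntegrable
    · exact (huIcc ▸ continuousOn_const.mul hcf).intervalIntegrable
    · intro t ht
      have ht0 : 0 ≤ t := ht.1
      have hp : 0 < p t := hpos t ht0
      have he : 0 < Real.exp (-(r * t)) := Real.exp_pos _
      have : Real.exp (-(r * t)) * (α - t) * p t
          = (α - t) * (Real.exp (-(r * t)) * p t) := by ring
      rw [this]
      have hαt : α - t ≤ α := by linarith
      calc (α - t) * (Real.exp (-(r * t)) * p t)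
          ≤ α * (Real.exp (-(r * t)) * p t) :=
            mul_le_mul_of_nonneg_right hαt (by positivity)
        _ = α * f t := rfl
  rw [intervalIntegral.integral_const_mul] at h1
  -- step 2 : ∫_0^α f ≤ a_x
  have h2 : (∫ t in (0:ℝ)..α, f t) ≤ ∫ t in Ioi 0, f t := by
    rw [intervalIntegral.integral_of_le hαnn]
    apply setIntegral_mono_set hint
    · filter_upwards [ae_restrict_mem measurableSet_Ioi] with t ht
      have := hpos t ht.le
      have he := Real.exp_pos (-(r * t))
      simp only [hf, Pi.zero_apply]
      positivity
    · exact HasSubset.Subset.eventuallyLE Ioc_subset_Ioi_self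
  -- combine
  have hrα : 0 ≤ r * α := by positivity
  have h3 : r * (∫ t in (0:ℝ)..α, Real.exp (-(r * t)) * (α - t) * p t) ≤ δ * α := by
    calc r * (∫ t in (0:ℝ)..α, Real.exp (-(r * t)) * (α - t) * p t)
        ≤ r * (α * ∫ t in (0:ℝ)..α, f t) := by
          apply mul_le_mul_of_nonneg_left h1 hr.le
      _ = (r * α) * ∫ t in (0:ℝ)..α, f t := by ring
      _ ≤ (r * α) * ∫ t in Ioi 0, f t := mul_le_mul_of_nonneg_left h2 hrα
      _ = α * (r * ∫ t in Ioi 0, f t) := by ring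
      _ ≤ α * δ := mul_le_mul_of_nonneg_left hδbig hαnn
      _ = δ * α := mul_comm _ _
  have : δ * α + (∫ t in Ioi α, f t) ≤ δ * α := heq.trans_le h3
  linarith
end

section
/- Let r>0, δ∈(0,1), and p a decreasing survival function with a_x = ∫_0^∞ e^{-rt}p(t)dt < ∞, and suppose δ < r·a_x. Then there exists a unique α>0 with δα + F(α) = G(α), where F(α)=∫_α^∞ e^{-rt}p(t)dt and G(α)=r∫_0^α e^{-rt}(α−t)p(t)dt. -/
open MeasureTheory Set Filter Topology

lemma lcr_integral_exp_Ioi {r : ℝ} (hr : 0 < r) (a : ℝ) :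
    ∫ t in Ioi a, Real.exp (-(r * t)) = Real.exp (-(r * a)) / r := by
  have hderiv : ∀ x ∈ Ici a,
      HasDerivAt (fun x => -Real.exp (-(r * x)) / r) (Real.exp (-(r * x))) x := by
    intro x _
    have h1 : HasDerivAt (fun x : ℝ => -(r * x)) (-r) x := by
      exact ((hasDerivAt_id x).const_mul r).neg.congr_deriv (by ring)
    have h2 := (h1.exp.neg.div_const r)
    refine h2.congr_deriv ?_
    field_simp
  have h3 : Tendsto (fun x : ℝ => -(r * x)) atTop atBot := by
    apply tendsto_neg_atBot_iff.mpr
    exact Tendsto.const_mul_atTop hr tendsto_id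
  have htend : Tendsto (fun x => -Real.exp (-(r * x)) / r) atTop (𝓝 0) := by
    have h4 := ((Real.tendsto_exp_atBot.comp h3).neg).div_const r
    simpa using h4
  have hint' : IntegrableOn (fun x => Real.exp (-(r * x))) (Ioi a) := by
    simpa [neg_mul] using exp_neg_integrableOn_Ioi a hr
  have key : ∫ x in Ioi a, Real.exp (-(r * x)) = 0 - (-Real.exp (-(r * a)) / r) :=
    integral_Ioi_of_hasDerivAt_of_tendsto' hderiv hint' htend
  rw [key]; ring

lemma lcr_cont {r : ℝ} {p : ℝ → ℝ} (hcont : ContinuousOn p (Ici 0)) :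
    Continuous (fun t => Real.exp (-(r * t)) * p (max t 0)) := by
  have hq : Continuous (fun t : ℝ => p (max t 0)) :=
    hcont.comp_continuous (continuous_id.max continuous_const)
      (fun x => mem_Ici.2 (le_max_right x 0))
  exact (Real.continuous_exp.comp ((continuous_const.mul continuous_id).neg)).mul hq

theorem loaded_cria_viable_exists_unique
    (r δ : ℝ) (hr : 0 < r) (hδ0 : 0 < δ) (hδ1 : δ < 1)
    (p : ℝ → ℝ)
    (hanti : AntitoneOn p (Ici 0))
    (hcont : ContinuousOn p (Ici 0))
    (hpos : ∀ t, 0 ≤ t → 0 < p t) (hle : ∀ t, 0 ≤ t → p t ≤ 1)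
    (hint : IntegrableOn (fun t => Real.exp (-(r * t)) * p t) (Ioi 0))
    (hδsmall : δ < r * (∫ t in Ioi 0, Real.exp (-(r * t)) * p t)) :
    ∃! α : ℝ, 0 < α ∧
      δ * α + (∫ t in Ioi α, Real.exp (-(r * t)) * p t) =
        r * ∫ t in (0 : ℝ)..α, Real.exp (-(r * t)) * (α - t) * p t := by
  set f : ℝ → ℝ := fun t => Real.exp (-(r * t)) * p (max t 0) with hf_def
  have hfc : Continuous f := lcr_cont hcont
  have hgc : Continuous (fun t => t * f t) := continuous_id.mul hfc
  set A : ℝ → ℝ := fun α => ∫ t in (0:ℝ)..α, f t with hA_def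
  set B : ℝ → ℝ := fun α => ∫ t in (0:ℝ)..α, t * f t with hB_def
  set ax : ℝ := ∫ t in Ioi 0, Real.exp (-(r * t)) * p t with hax_def
  set H : ℝ → ℝ := fun α => δ * α + ax - A α - r * (α * A α - B α) with hH_def
  -- derivative facts
  have hA_deriv : ∀ α : ℝ, HasDerivAt A (f α) α := by
    intro α
    exact intervalIntegral.integral_hasDerivAt_right
      (hfc.intervalIntegrable 0 α)
      (hfc.stronglyMeasurable.stronglyMeasurableAtFilter)
      hfc.continuousAt
  have hB_deriv : ∀ α : ℝ, HasDerivAt B (α * f α) α := by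
    intro α
    exact intervalIntegral.integral_hasDerivAt_right
      (hgc.intervalIntegrable 0 α)
      (hgc.stronglyMeasurable.stronglyMeasurableAtFilter)
      hgc.continuousAt
  have hH_deriv : ∀ α : ℝ, HasDerivAt H (δ - f α - r * A α) α := by
    intro α
    have h1 : HasDerivAt (fun x : ℝ => δ * x) δ α := by
      simpa using (hasDerivAt_id α).const_mul δ
    have h2 : HasDerivAt (fun x : ℝ => x * A x) (1 * A α + α * f α) α :=
      (hasDerivAt_id α).mul (hA_deriv α)
    have h3 : HasDerivAt (fun x : ℝ => x * A x - B x) (1 * A α + α * f α - α * f α) α :=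
      h2.sub (hB_deriv α)
    have h4 := ((h1.add_const ax).sub (hA_deriv α)).sub (h3.const_mul r)
    refine h4.congr_deriv ?_
    ring
  have hH_cont : Continuous H := by
    have : Differentiable ℝ H := fun α => (hH_deriv α).differentiableAt
    exact this.continuous
  -- splitting the integral
  have horig_eq : ∀ α : ℝ, 0 ≤ α → EqOn (fun t => Real.exp (-(r * t)) * p t) f (Ioi α) := by
    intro α hα t ht
    have : max t 0 = t := max_eq_left (hα.trans (le_of_lt ht))
    simp [hf_def, this]
  have hsplit : ∀ α : ℝ, 0 ≤ α →
      (∫ t in Ioi α, Real.exp (-(r * t)) * p t) = ax - A α := by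
    intro α hα
    have h1 : A α = ∫ t in Ioc 0 α, Real.exp (-(r * t)) * p t := by
      show (∫ t in (0:ℝ)..α, f t) = _
      rw [intervalIntegral.integral_of_le hα]
      refine setIntegral_congr_fun measurableSet_Ioc ?_
      intro t ht
      have : max t 0 = t := max_eq_left (le_of_lt ht.1)
      simp [hf_def, this]
    have h2 : ax = (∫ t in Ioc 0 α, Real.exp (-(r * t)) * p t)
        + ∫ t in Ioi α, Real.exp (-(r * t)) * p t := by
      rw [hax_def, ← Ioc_union_Ioi_eq_Ioi hα]
      exact setIntegral_union Ioc_disjoint_Ioi_same measurableSet_Ioi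
        (hint.mono_set (by rw [← Ioc_union_Ioi_eq_Ioi hα]; exact subset_union_left))
        (hint.mono_set (by rw [← Ioc_union_Ioi_eq_Ioi hα]; exact subset_union_right))
    rw [h2, h1]; ring
  -- tail bound
  have htail : ∀ α : ℝ, 0 ≤ α →
      r * (∫ t in Ioi α, Real.exp (-(r * t)) * p t) ≤ f α := by
    intro α hα
    have hIα : IntegrableOn (fun t => Real.exp (-(r * t)) * p t) (Ioi α) :=
      hint.mono_set (Ioi_subset_Ioi hα)
    have hIe : IntegrableOn (fun t => Real.exp (-(r * t))) (Ioi α) := by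
      simpa [neg_mul] using exp_neg_integrableOn_Ioi α hr
    have hIe' : IntegrableOn (fun t => Real.exp (-(r * t)) * p α) (Ioi α) :=
      hIe.mul_const (p α)
    have hmono : (∫ t in Ioi α, Real.exp (-(r * t)) * p t)
        ≤ ∫ t in Ioi α, Real.exp (-(r * t)) * p α := by
      refine setIntegral_mono_on hIα hIe' measurableSet_Ioi ?_
      intro t ht
      have hpt : p t ≤ p α := hanti (mem_Ici.2 hα) (mem_Ici.2 (hα.trans (le_of_lt ht)))
        (le_of_lt ht)
      exact mul_le_mul_of_nonneg_left hpt (Real.exp_pos _).le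
    have hval : (∫ t in Ioi α, Real.exp (-(r * t)) * p α)
        = Real.exp (-(r * α)) / r * p α := by
      rw [integral_mul_const, lcr_integral_exp_Ioi hr]
    have hfα : f α = Real.exp (-(r * α)) * p α := by
      simp [hf_def, max_eq_left hα]
    rw [hfα]
    calc r * (∫ t in Ioi α, Real.exp (-(r * t)) * p t)
        ≤ r * (Real.exp (-(r * α)) / r * p α) := by
          rw [← hval]; exact mul_le_mul_of_nonneg_left hmono hr.le
      _ = Real.exp (-(r * α)) * p α := by field_simp
  -- positivity of ax
  have hax_pos : 0 < ax := by nlinarith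
  -- H 0 = ax
  have hH0 : H 0 = ax := by
    simp [hH_def, hA_def, hB_def, intervalIntegral.integral_same]
  -- derivative is negative on Ici 0
  have hneg : ∀ α : ℝ, 0 ≤ α → δ - f α - r * A α < 0 := by
    intro α hα
    have h1 := htail α hα
    have h2 := hsplit α hα
    have : r * (ax - A α) ≤ f α := by rw [← h2]; exact h1
    nlinarith
  -- strict antitonicity
  have hstrict : StrictAntiOn H (Ici 0) := by
    refine strictAntiOn_of_deriv_neg (convex_Ici 0) hH_cont.continuousOn ?_
    intro x hx
    rw [interior_Ici] at hx
    rw [(hH_deriv x).deriv]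
    exact hneg x (le_of_lt hx)
  -- linear bound : H α ≤ ax + (δ - r * ax) * α on Ici 0
  have hlin : ∀ α : ℝ, 0 ≤ α → H α ≤ ax + (δ - r * ax) * α := by
    intro α hα
    set L : ℝ → ℝ := fun x => H x - (δ - r * ax) * x with hL_def
    have hL_deriv : ∀ x : ℝ, HasDerivAt L (r * ax - f x - r * A x) x := by
      intro x
      have := (hH_deriv x).sub ((hasDerivAt_id x).const_mul (δ - r * ax))
      refine this.congr_deriv ?_
      ring
    have hanti' : AntitoneOn L (Ici 0) := by
      refine antitoneOn_of_deriv_nonpos (convex_Ici 0) ?_ ?_ ?_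
      · exact (Differentiable.continuous (fun x => (hL_deriv x).differentiableAt)).continuousOn
      · intro x _; exact (hL_deriv x).differentiableAt.differentiableWithinAt
      · intro x hx
        rw [interior_Ici] at hx
        rw [(hL_deriv x).deriv]
        have h2 := hsplit x (le_of_lt hx)
        have h1 := htail x (le_of_lt hx)
        have : r * (ax - A x) ≤ f x := by rw [← h2]; exact h1
        nlinarith
    have := hanti' (mem_Ici.2 le_rfl) (mem_Ici.2 hα) hα
    have hL0 : L 0 = ax := by simp [hL_def, hH0]
    rw [hL0] at this
    simp only [hL_def] at this
    linarith
  -- choose M with H M < 0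
  have hc : 0 < r * ax - δ := by linarith
  set M : ℝ := ax / (r * ax - δ) + 1 with hM_def
  have hM_pos : 0 < M := by positivity
  have hHM : H M < 0 := by
    have h1 := hlin M hM_pos.le
    have h2 : ax + (δ - r * ax) * M = -(r * ax - δ) := by
      rw [hM_def]; field_simp [show ax * r - δ ≠ 0 by linarith]; ring
    linarith
  -- existence via IVT
  have hIoo : (0:ℝ) ∈ Ioo (H M) (H 0) := ⟨hHM, by rw [hH0]; exact hax_pos⟩
  obtain ⟨α, hαmem, hHα⟩ := intermediate_value_Ioo' hM_pos.le hH_cont.continuousOn hIoo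
  -- the equation is equivalent to H = 0
  have hiff : ∀ x : ℝ, 0 ≤ x →
      ((δ * x + (∫ t in Ioi x, Real.exp (-(r * t)) * p t) =
        r * ∫ t in (0 : ℝ)..x, Real.exp (-(r * t)) * (x - t) * p t) ↔ H x = 0) := by
    intro x hx
    have heq2 : (∫ t in (0 : ℝ)..x, Real.exp (-(r * t)) * (x - t) * p t)
        = x * A x - B x := by
      have hcongr : (∫ t in (0 : ℝ)..x, Real.exp (-(r * t)) * (x - t) * p t)
          = ∫ t in (0 : ℝ)..x, (x * f t - t * f t) := by
        refine intervalIntegral.integral_congr ?_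
        intro t ht
        rw [uIcc_of_le hx] at ht
        have hmax : max t 0 = t := max_eq_left ht.1
        simp only [hf_def, hmax]
        ring
      rw [hcongr, intervalIntegral.integral_sub
        ((hfc.intervalIntegrable 0 x).const_mul x) (hgc.intervalIntegrable 0 x),
        intervalIntegral.integral_const_mul]
    rw [hsplit x hx, heq2]
    constructor
    · intro h; simp only [hH_def]; linarith
    · intro h; simp only [hH_def] at h; linarith
  refine ⟨α, ⟨hαmem.1, (hiff α hαmem.1.le).mpr hHα⟩, ?_⟩
  rintro β ⟨hβpos, hβeq⟩
  have hHβ : H β = 0 := (hiff β hβpos.le).mp hβeq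
  exact hstrict.injOn (mem_Ici.2 hβpos.le) (mem_Ici.2 hαmem.1.le) (by rw [hHβ, hHα])
end

section
/- Let r>0, π≥0, and p a decreasing survival function with p(0)=1, p(t)→0, ∫_0^∞ e^{-rt}p(t)dt<∞. Define H(α) = (1−e^{-rα})/r + ∫_α^∞ e^{-rs}p(s)ds. Then there is a unique α°>0 with α°/(1+π) = H(α°). -/
open MeasureTheory Set Filter

theorem iria_loaded_exists_unique
    (r π : ℝ) (hr : 0 < r) (hπ : 0 ≤ π)
    (p : ℝ → ℝ)
    (hanti : AntitoneOn p (Ici 0))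
    (hcont : ContinuousOn p (Ici 0))
    (hpos : ∀ t, 0 ≤ t → 0 < p t) (hle : ∀ t, 0 ≤ t → p t ≤ 1)
    (hp0 : p 0 = 1)
    (hlim : Tendsto p atTop (nhds 0))
    (hint : IntegrableOn (fun t => Real.exp (-(r * t)) * p t) (Ioi 0)) :
    ∃! α : ℝ, 0 < α ∧
      α / (1 + π) =
        (1 - Real.exp (-(r * α))) / r + ∫ s in Ioi α, Real.exp (-(r * s)) * p s := by
  set f : ℝ → ℝ := fun t => Real.exp (-(r * t)) * p t with hf
  have h1π : (0:ℝ) < 1 + π := by linarith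
  have hfpos : ∀ x, 0 ≤ x → 0 < f x := fun x hx =>
    mul_pos (Real.exp_pos _) (hpos x hx)
  have hfae : ∀ a : ℝ, 0 ≤ a → 0 ≤ᵐ[volume.restrict (Ioi a)] f := by
    intro a ha
    refine (ae_restrict_iff' measurableSet_Ioi).2 (Eventually.of_forall ?_)
    intro x hx; exact (hfpos x (le_trans ha (le_of_lt hx))).le
  have hintα : ∀ a : ℝ, 0 ≤ a → IntegrableOn f (Ioi a) :=
    fun a ha => hint.mono_set (Ioi_subset_Ioi ha)
  set C : ℝ := ∫ s in Ioi (0:ℝ), f s with hC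
  set Q : ℝ → ℝ := fun a => ∫ s in Ioc (0:ℝ) a, f s with hQdef
  have hQint : ∀ a : ℝ, IntegrableOn f (Ioc 0 a) :=
    fun a => hint.mono_set Ioc_subset_Ioi_self
  -- splitting the tail integral
  have hsplit : ∀ a : ℝ, 0 ≤ a → (∫ s in Ioi a, f s) = C - Q a := by
    intro a ha
    have hdisj : Disjoint (Ioc 0 a) (Ioi a) := Ioc_disjoint_Ioi le_rfl
    have hun : Ioc 0 a ∪ Ioi a = Ioi 0 := Ioc_union_Ioi_eq_Ioi ha
    have h := MeasureTheory.setIntegral_union hdisj measurableSet_Ioi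
      (hQint a) (hintα a ha)
    rw [hun] at h
    rw [hC, h, hQdef]; ring
  -- strict positivity of the tail
  have hvpos : ∀ a : ℝ, 0 ≤ a → 0 < ∫ s in Ioi a, f s := by
    intro a ha
    have hsub : Ioc a (a + 1) ⊆ Ioi 0 := fun x hx => lt_of_le_of_lt ha hx.1
    have hIoc : IntegrableOn f (Ioc a (a + 1)) := hint.mono_set hsub
    have hii : IntervalIntegrable f volume a (a + 1) :=
      (intervalIntegrable_iff_integrableOn_Ioc_of_le (by linarith)).2 hIoc
    have hp1 : 0 < ∫ x in a..(a + 1), f x := by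
      refine intervalIntegral.intervalIntegral_pos_of_pos_on hii ?_ (by linarith)
      intro x hx; exact hfpos x (le_trans ha hx.1.le)
    have heq : (∫ x in a..(a + 1), f x) = ∫ x in Ioc a (a + 1), f x :=
      intervalIntegral.integral_of_le (by linarith)
    have hmono : (∫ x in Ioc a (a + 1), f x) ≤ ∫ s in Ioi a, f s :=
      setIntegral_mono_set (hintα a ha) (hfae a ha)
        (HasSubset.Subset.eventuallyLE Ioc_subset_Ioi_self)
    linarith [heq ▸ hp1]
  -- Q is monotone on nonneg reals
  have hQmono : ∀ a b : ℝ, a ≤ b → Q a ≤ Q b := by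
    intro a b hab
    refine setIntegral_mono_set (hQint b) ?_
      (HasSubset.Subset.eventuallyLE (Ioc_subset_Ioc_right hab))
    refine (ae_restrict_iff' measurableSet_Ioc).2 (Eventually.of_forall ?_)
    intro x hx; exact (hfpos x hx.1.le).le
  have hCnonneg : 0 ≤ C := setIntegral_nonneg measurableSet_Ioi
    (fun x hx => (hfpos x hx.le).le)
  -- the function u and its derivative
  set u : ℝ → ℝ := fun x => x / (1 + π) - (1 - Real.exp (-(r * x))) / r with hu
  have hu' : ∀ x : ℝ, HasDerivAt u (1 / (1 + π) - Real.exp (-(r * x))) x := by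
    intro x
    have h1 : HasDerivAt (fun y : ℝ => y / (1 + π)) (1 / (1 + π)) x := by
      simpa using (hasDerivAt_id x).div_const (1 + π)
    have h2 : HasDerivAt (fun y : ℝ => -(r * y)) (-r) x := by
      have h := ((hasDerivAt_id x).const_mul r).neg; simp only [id, mul_one] at h; exact h
    have h3 : HasDerivAt (fun y : ℝ => Real.exp (-(r * y)))
        (Real.exp (-(r * x)) * (-r)) x := h2.exp
    have h4 : HasDerivAt (fun y : ℝ => (1 - Real.exp (-(r * y))) / r)
        ((0 - Real.exp (-(r * x)) * (-r)) / r) x :=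
      ((hasDerivAt_const x (1:ℝ)).sub h3).div_const r
    have h5 := h1.sub h4
    exact h5.congr_deriv (by rw [zero_sub, mul_neg, neg_neg, mul_div_assoc, div_self hr.ne', mul_one])
  have hucont : Continuous u := by
    apply Continuous.sub
    · exact continuous_id.div_const _
    · exact ((continuous_const.sub (Real.continuous_exp.comp
        ((continuous_const.mul continuous_id).neg))).div_const r)
  set m : ℝ := Real.log (1 + π) / r with hm
  have hm0 : 0 ≤ m := div_nonneg (Real.log_nonneg (by linarith)) hr.le
  have hinv : 1 / (1 + π) = Real.exp (-(r * m)) := by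
    rw [hm]
    rw [show -(r * (Real.log (1 + π) / r)) = -Real.log (1 + π) by field_simp]
    rw [Real.exp_neg, Real.exp_log h1π, one_div]
  -- u strictly monotone on [m, ∞)
  have husm : StrictMonoOn u (Ici m) := by
    apply strictMonoOn_of_deriv_pos (convex_Ici m) hucont.continuousOn
    intro x hx
    rw [interior_Ici] at hx
    rw [(hu' x).deriv, hinv]
    have : Real.exp (-(r * x)) < Real.exp (-(r * m)) := by
      apply Real.exp_lt_exp.2
      have := (mul_lt_mul_iff_right₀ hr).2 hx
      linarith
    linarith
  -- u antitone on [0, m]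
  have huan : AntitoneOn u (Icc 0 m) := by
    apply antitoneOn_of_deriv_nonpos (convex_Icc 0 m) hucont.continuousOn
    · intro x _; exact (hu' x).differentiableAt.differentiableWithinAt
    · intro x hx
      rw [interior_Icc] at hx
      rw [(hu' x).deriv, hinv]
      have : Real.exp (-(r * m)) ≤ Real.exp (-(r * x)) := by
        apply Real.exp_le_exp.2
        have := (mul_lt_mul_iff_right₀ hr).2 hx.2
        linarith
      linarith
  have hu0 : u 0 = 0 := by simp [hu]
  -- any solution lies strictly above m
  have hsolgt : ∀ α : ℝ, 0 < α →
      α / (1 + π) = (1 - Real.exp (-(r * α))) / r + (∫ s in Ioi α, f s) →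
      m < α := by
    intro α hα heq
    by_contra h
    push_neg at h
    have h1 : u α ≤ u 0 := huan ⟨le_rfl, hm0⟩ ⟨hα.le, h⟩ hα.le
    have h2 : u α = ∫ s in Ioi α, f s := by rw [hu]; linarith
    have h3 := hvpos α hα.le
    rw [hu0] at h1
    linarith [h2 ▸ h3]
  -- W := u + Q is strictly monotone on [m, ∞)
  have hWsm : StrictMonoOn (fun x => u x + Q x) (Ici m) := by
    intro a ha b hb hab
    have h1 := husm ha hb hab
    have h2 := hQmono a b hab.le
    dsimp only
    linarith
  -- existence
  set c : ℝ := ∫ s in Ioi (1:ℝ), f s with hc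
  have hcpos : 0 < c := hvpos 1 zero_le_one
  set lo : ℝ := min 1 (c * (1 + π) / 2) with hlo
  have hlopos : 0 < lo := lt_min one_pos (by positivity)
  set M : ℝ := 1 / r + C with hM
  have hMpos : 0 < M := by positivity
  set hi : ℝ := max (lo + 1) ((1 + π) * (M + 1)) with hhi
  have hlohi : lo ≤ hi := le_trans (by linarith) (le_max_left _ _)
  -- the function for IVT
  set W : ℝ → ℝ := fun x => u x - C + Q x with hW
  have hWcont : ContinuousOn W (Icc lo hi) := by
    have hQc : ContinuousOn Q (Icc 0 hi) := by
      apply intervalIntegral.continuousOn_primitive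
      have : IntegrableOn f (Ioc 0 hi) := hQint hi
      rwa [integrableOn_Icc_iff_integrableOn_Ioc]
    have hsub : Icc lo hi ⊆ Icc 0 hi := Icc_subset_Icc hlopos.le le_rfl
    exact ((hucont.continuousOn.sub continuousOn_const).add
      (hQc.mono hsub))
  have hWlo : W lo ≤ 0 := by
    have h1 : lo ≤ 1 := min_le_left _ _
    have h2 : (∫ s in Ioi lo, f s) = C - Q lo := hsplit lo hlopos.le
    have h3 : c ≤ ∫ s in Ioi lo, f s :=
      setIntegral_mono_set (hintα lo hlopos.le) (hfae lo hlopos.le)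
        (HasSubset.Subset.eventuallyLE (Ioi_subset_Ioi h1))
    have h4 : lo / (1 + π) ≤ c / 2 := by
      rw [div_le_iff₀ h1π]
      have : lo ≤ c * (1 + π) / 2 := min_le_right _ _
      linarith
    have h5 : 0 ≤ (1 - Real.exp (-(r * lo))) / r := by
      apply div_nonneg _ hr.le
      have : Real.exp (-(r * lo)) ≤ 1 := by
        rw [show (1:ℝ) = Real.exp 0 by simp]
        apply Real.exp_le_exp.2; nlinarith
      linarith
    rw [hW, hu]
    dsimp only
    linarith
  have hWhi : 0 ≤ W hi := by
    have hhi0 : 0 ≤ hi := le_trans (by linarith) (le_max_left _ _)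
    have h2 : (∫ s in Ioi hi, f s) = C - Q hi := hsplit hi hhi0
    have h3 : (∫ s in Ioi hi, f s) ≤ C :=
      setIntegral_mono_set (hintα 0 le_rfl) (hfae 0 le_rfl)
        (HasSubset.Subset.eventuallyLE (Ioi_subset_Ioi hhi0))
    have h4 : (1 + π) * (M + 1) ≤ hi := le_max_right _ _
    have h5 : M + 1 ≤ hi / (1 + π) := by
      rw [le_div_iff₀ h1π]; linarith [mul_comm (1 + π) (M + 1)]
    have h6 : (1 - Real.exp (-(r * hi))) / r ≤ 1 / r := by
      apply (div_le_div_iff_of_pos_right hr).2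
      linarith [Real.exp_pos (-(r * hi))]
    rw [hW, hu]
    dsimp only
    linarith
  -- intermediate value theorem
  obtain ⟨α, hαmem, hWα⟩ := intermediate_value_Icc hlohi hWcont ⟨hWlo, hWhi⟩
  have hαpos : 0 < α := lt_of_lt_of_le hlopos hαmem.1
  have heqα : α / (1 + π) = (1 - Real.exp (-(r * α))) / r + ∫ s in Ioi α, f s := by
    have h1 : (∫ s in Ioi α, f s) = C - Q α := hsplit α hαpos.le
    have h2 : u α - C + Q α = 0 := hWα
    rw [hu] at h2
    dsimp only at h2
    linarith
  refine ⟨α, ⟨hαpos, heqα⟩, ?_⟩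
  rintro β ⟨hβpos, heqβ⟩
  have hβm : m < β := hsolgt β hβpos heqβ
  have hαm : m < α := hsolgt α hαpos heqα
  have hvalβ : u β + Q β = C := by
    have h1 : (∫ s in Ioi β, f s) = C - Q β := hsplit β hβpos.le
    rw [hu]; dsimp only; linarith
  have hvalα : u α + Q α = C := by
    have h1 : (∫ s in Ioi α, f s) = C - Q α := hsplit α hαpos.le
    rw [hu]; dsimp only; linarith
  exact hWsm.injOn hβm.le hαm.le (by rw [hvalα, hvalβ])
end

section
/- Fix r>0, π>0, and a family of survival functions p_x(t)=exp(−∫_0^t λ(x+s)ds) with increasing hazard λ. The loaded instalment-refund price α°(x) is decreasing in x, and there exists z>0 (independent of x) with α°(x) > z for all x; in particular liminf_{x→∞} α°(x) > 0. If instead π=0 and λ(x)→∞, then α°(x)→0 as x→∞. -/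
open MeasureTheory Set Filter

private lemma exp_decay_integral (c : ℝ) (hc : 0 < c) :
    ∫ s in Ioi (0:ℝ), Real.exp (-(c * s)) = 1 / c := by
  have hderiv : ∀ x ∈ Ici (0:ℝ),
      HasDerivAt (fun s => -Real.exp (-(c * s)) / c) (Real.exp (-(c * x))) x := by
    intro x _
    have h := ((((hasDerivAt_id x).const_mul c).neg).exp).neg.div_const c
    convert h using 1
    all_goals try rfl
    field_simp
    simp
  have hint : IntegrableOn (fun s => Real.exp (-(c * s))) (Ioi (0:ℝ)) := by
    simpa [neg_mul] using exp_neg_integrableOn_Ioi 0 hc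
  have htend : Tendsto (fun s => -Real.exp (-(c * s)) / c) atTop (nhds 0) := by
    have h1 : Tendsto (fun s : ℝ => -(c * s)) atTop atBot :=
      tendsto_neg_atTop_atBot.comp (tendsto_id.const_mul_atTop hc)
    have h2 : Tendsto (fun s : ℝ => Real.exp (-(c * s))) atTop (nhds 0) :=
      Real.tendsto_exp_atBot.comp h1
    simpa using (h2.neg).div_const c
  have := MeasureTheory.integral_Ioi_of_hasDerivAt_of_tendsto' hderiv hint htend
  rw [this]
  norm_num
  rw [neg_div, neg_neg, one_div]

theorem iria_price_in_age
    (r π : ℝ) (hr : 0 < r) (hπ : 0 ≤ π)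
    (lam : ℝ → ℝ) (hlamcont : Continuous lam) (hlampos : ∀ x, 0 < lam x)
    (hlammono : Monotone lam)
    (p : ℝ → ℝ → ℝ)
    (hp : ∀ x t, p x t = Real.exp (-(∫ s in (0 : ℝ)..t, lam (x + s))))
    (acirc : ℝ → ℝ)
    (hsol : ∀ x, 0 < acirc x ∧
      acirc x / (1 + π) =
        (1 - Real.exp (-(r * acirc x))) / r +
          ∫ s in Ioi (acirc x), Real.exp (-(r * s)) * p x s) :
    (∀ x₁ x₂, x₁ ≤ x₂ → acirc x₂ ≤ acirc x₁) ∧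
    (0 < π → ∃ z : ℝ, 0 < z ∧ ∀ x, z < acirc x) ∧
    (π = 0 → Tendsto lam atTop atTop → Tendsto acirc atTop (nhds 0)) := by
  have hπ1 : (0:ℝ) < 1 + π := by linarith
  -- continuity facts
  have hcontx : ∀ x : ℝ, Continuous fun s => lam (x + s) :=
    fun x => hlamcont.comp (continuous_const.add continuous_id)
  have hΛcont : ∀ x : ℝ, Continuous fun t => ∫ s in (0:ℝ)..t, lam (x + s) :=
    fun x => intervalIntegral.continuous_primitive
      (fun a b => (hcontx x).intervalIntegrable a b) 0
  have hpcont : ∀ x : ℝ, Continuous fun s => Real.exp (-(r * s)) * p x s := by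
    intro x
    have : (fun s => Real.exp (-(r * s)) * p x s)
        = fun s => Real.exp (-(r * s)) *
            Real.exp (-(∫ u in (0:ℝ)..s, lam (x + u))) := by
      funext s; rw [hp]
    rw [this]
    exact (Real.continuous_exp.comp (continuous_const.mul continuous_id).neg).mul
      (Real.continuous_exp.comp (hΛcont x).neg)
  -- positivity and bounds for p
  have hppos : ∀ x t, 0 < p x t := by
    intro x t; rw [hp]; exact Real.exp_pos _
  have hple1 : ∀ x t, 0 ≤ t → p x t ≤ 1 := by
    intro x t ht
    rw [hp]
    apply Real.exp_le_one_iff.mpr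
    simp only [neg_nonpos]
    exact intervalIntegral.integral_nonneg ht (fun u _ => (hlampos _).le)
  have hpbound : ∀ x t, 0 ≤ t → p x t ≤ Real.exp (-(lam x * t)) := by
    intro x t ht
    rw [hp]
    apply Real.exp_le_exp.mpr
    simp only [neg_le_neg_iff]
    have h1 : ∫ s in (0:ℝ)..t, lam x ≤ ∫ s in (0:ℝ)..t, lam (x + s) := by
      apply intervalIntegral.integral_mono_on ht intervalIntegrable_const
        ((hcontx x).intervalIntegrable 0 t)
      intro s hs
      exact hlammono (le_add_of_nonneg_right hs.1)
    simpa [mul_comm] using h1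
  have hpmono : ∀ t, 0 ≤ t → ∀ x₁ x₂, x₁ ≤ x₂ → p x₂ t ≤ p x₁ t := by
    intro t ht x₁ x₂ hx
    rw [hp, hp]
    apply Real.exp_le_exp.mpr
    simp only [neg_le_neg_iff]
    apply intervalIntegral.integral_mono_on ht ((hcontx x₁).intervalIntegrable 0 t)
      ((hcontx x₂).intervalIntegrable 0 t)
    intro s _
    exact hlammono (by linarith)
  -- integrability of the tail integrand
  have hint : ∀ x a, 0 ≤ a →
      IntegrableOn (fun s => Real.exp (-(r * s)) * p x s) (Ioi a) := by
    intro x a ha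
    have hg : IntegrableOn (fun s => Real.exp (-(r * s))) (Ioi a) := by
      simpa [neg_mul] using exp_neg_integrableOn_Ioi a hr
    apply hg.mono' ((hpcont x).aestronglyMeasurable.restrict)
    rw [ae_restrict_iff' measurableSet_Ioi]
    filter_upwards with s hs
    have hs0 : (0:ℝ) ≤ s := le_trans ha (le_of_lt hs)
    have h1 : 0 < Real.exp (-(r * s)) * p x s :=
      mul_pos (Real.exp_pos _) (hppos x s)
    rw [Real.norm_eq_abs, abs_of_pos h1]
    calc Real.exp (-(r * s)) * p x s ≤ Real.exp (-(r * s)) * 1 :=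
          mul_le_mul_of_nonneg_left (hple1 x s hs0) (Real.exp_pos _).le
      _ = Real.exp (-(r * s)) := mul_one _
  -- positivity of the tail integral
  have hvpos : ∀ x a, 0 ≤ a → 0 < ∫ s in Ioi a, Real.exp (-(r * s)) * p x s := by
    intro x a ha
    have hnn : 0 ≤ᵐ[volume.restrict (Ioi a)] fun s => Real.exp (-(r * s)) * p x s := by
      filter_upwards with s
      exact (mul_pos (Real.exp_pos _) (hppos x s)).le
    refine (setIntegral_pos_iff_support_of_nonneg_ae hnn (hint x a ha)).mpr ?_
    have hsupp : Function.support (fun s => Real.exp (-(r * s)) * p x s) = univ := by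
      ext s
      simp only [Function.mem_support, mem_univ, iff_true]
      exact (mul_pos (Real.exp_pos _) (hppos x s)).ne'
    rw [hsupp, univ_inter, Real.volume_Ioi]
    exact ENNReal.zero_lt_top
  -- the "premium" function u and its properties
  set A : ℝ := Real.log (1 + π) / r with hA
  have hA0 : 0 ≤ A := div_nonneg (Real.log_nonneg (by linarith)) hr.le
  set u : ℝ → ℝ := fun a => a / (1 + π) - (1 - Real.exp (-(r * a))) / r with hu
  have hu0 : u 0 = 0 := by simp [hu]
  have huderiv : ∀ a : ℝ, HasDerivAt u (1 / (1 + π) - Real.exp (-(r * a))) a := by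
    intro a
    have h1 : HasDerivAt (fun a : ℝ => a / (1 + π)) (1 / (1 + π)) a := by
      simpa using (hasDerivAt_id a).div_const (1 + π)
    have h2 : HasDerivAt (fun a : ℝ => (1 - Real.exp (-(r * a))) / r)
        (Real.exp (-(r * a))) a := by
      have h3 := ((((hasDerivAt_id a).const_mul r).neg).exp).const_sub 1 |>.div_const r
      convert h3 using 1
      all_goals try rfl
      field_simp
      simp
    exact h1.sub h2
  have hucont : Continuous u := by
    rw [continuous_iff_continuousAt]
    exact fun a => (huderiv a).continuousAt
  have hderiv_eq : ∀ a : ℝ, deriv u a = 1 / (1 + π) - Real.exp (-(r * a)) :=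
    fun a => (huderiv a).deriv
  have hexpA : Real.exp (-(r * A)) = 1 / (1 + π) := by
    rw [hA, mul_div_cancel₀ _ hr.ne', Real.exp_neg, Real.exp_log hπ1]
    exact (one_div _).symm
  have humono : StrictMonoOn u (Ici A) := by
    apply strictMonoOn_of_deriv_pos (convex_Ici A) hucont.continuousOn
    intro a ha
    rw [interior_Ici] at ha
    rw [hderiv_eq, sub_pos, ← hexpA]
    exact Real.exp_lt_exp.mpr (by nlinarith [mem_Ioi.mp ha])
  have huanti : AntitoneOn u (Icc 0 A) := by
    apply antitoneOn_of_deriv_nonpos (convex_Icc 0 A) hucont.continuousOn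
      (fun a _ => ((huderiv a).differentiableAt).differentiableWithinAt)
    intro a ha
    rw [interior_Icc] at ha
    rw [hderiv_eq, sub_nonpos, ← hexpA]
    exact Real.exp_le_exp.mpr (by nlinarith [ha.2.le])
  -- each solution satisfies u (acirc x) = tail integral > 0 and hence acirc x > A
  have hueq : ∀ x, u (acirc x) = ∫ s in Ioi (acirc x), Real.exp (-(r * s)) * p x s := by
    intro x
    have h := (hsol x).2
    rw [hu]
    linarith
  have hupos : ∀ x, 0 < u (acirc x) := by
    intro x
    rw [hueq x]
    exact hvpos x (acirc x) (hsol x).1.le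
  have hgtA : ∀ x, A < acirc x := by
    intro x
    by_contra h
    push_neg at h
    have h1 : u (acirc x) ≤ u 0 :=
      huanti (left_mem_Icc.mpr hA0) ⟨(hsol x).1.le, h⟩ (hsol x).1.le
    rw [hu0] at h1
    exact absurd (hupos x) (not_lt.mpr h1)
  -- monotonicity in age
  have hmono_acirc : ∀ x₁ x₂, x₁ ≤ x₂ → acirc x₂ ≤ acirc x₁ := by
    intro x₁ x₂ hx
    by_contra h
    push_neg at h
    have h1 : u (acirc x₁) < u (acirc x₂) :=
      humono (le_of_lt (hgtA x₁)) (le_of_lt (hgtA x₂)) h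
    have h2 : (∫ s in Ioi (acirc x₂), Real.exp (-(r * s)) * p x₂ s)
        ≤ ∫ s in Ioi (acirc x₂), Real.exp (-(r * s)) * p x₁ s := by
      apply setIntegral_mono_on (hint x₂ _ (hsol x₂).1.le) (hint x₁ _ (hsol x₂).1.le)
        measurableSet_Ioi
      intro s hs
      have hs0 : 0 ≤ s := le_trans (hsol x₂).1.le (le_of_lt hs)
      exact mul_le_mul_of_nonneg_left (hpmono s hs0 x₁ x₂ hx) (Real.exp_pos _).le
    have h3 : (∫ s in Ioi (acirc x₂), Real.exp (-(r * s)) * p x₁ s)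
        ≤ ∫ s in Ioi (acirc x₁), Real.exp (-(r * s)) * p x₁ s := by
      apply setIntegral_mono_set (hint x₁ _ (hsol x₁).1.le)
      · filter_upwards with s
        exact (mul_pos (Real.exp_pos _) (hppos x₁ s)).le
      · exact HasSubset.Subset.eventuallyLE (Ioi_subset_Ioi h.le)
    rw [hueq x₁, hueq x₂] at h1
    linarith
  refine ⟨hmono_acirc, ?_, ?_⟩
  · -- loaded case : uniform positive lower bound
    intro hπpos
    exact ⟨A, div_pos (Real.log_pos (by linarith)) hr, hgtA⟩
  · -- unloaded case : price tends to zero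
    intro hπ0 hlamtop
    subst hπ0
    have hAzero : A = 0 := by simp [hA]
    rw [Metric.tendsto_nhds]
    intro ε hε
    have huε : 0 < u ε := by
      have := humono (by rw [hAzero]; exact self_mem_Ici)
        (by rw [hAzero]; exact mem_Ici.mpr hε.le) hε
      rwa [hu0] at this
    filter_upwards [hlamtop.eventually_gt_atTop (1 / u ε)] with x hx
    have hlamx : 0 < lam x := hlampos x
    -- bound the tail integral
    have hb1 : (∫ s in Ioi (acirc x), Real.exp (-(r * s)) * p x s)
        ≤ ∫ s in Ioi (0:ℝ), Real.exp (-(r * s)) * p x s := by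
      apply setIntegral_mono_set (hint x 0 le_rfl)
      · filter_upwards with s
        exact (mul_pos (Real.exp_pos _) (hppos x s)).le
      · exact HasSubset.Subset.eventuallyLE (Ioi_subset_Ioi (hsol x).1.le)
    have hb2 : (∫ s in Ioi (0:ℝ), Real.exp (-(r * s)) * p x s)
        ≤ ∫ s in Ioi (0:ℝ), Real.exp (-((r + lam x) * s)) := by
      have hintg : IntegrableOn (fun s => Real.exp (-((r + lam x) * s))) (Ioi (0:ℝ)) := by
        have hpos : 0 < r + lam x := by linarith
        simpa only [neg_mul] using exp_neg_integrableOn_Ioi 0 hpos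
      apply setIntegral_mono_on (hint x 0 le_rfl) hintg measurableSet_Ioi
      intro s hs
      have hs0 : 0 ≤ s := (mem_Ioi.mp hs).le
      calc Real.exp (-(r * s)) * p x s
          ≤ Real.exp (-(r * s)) * Real.exp (-(lam x * s)) :=
            mul_le_mul_of_nonneg_left (hpbound x s hs0) (Real.exp_pos _).le
        _ = Real.exp (-((r + lam x) * s)) := by
            rw [← Real.exp_add]; ring_nf
    have hb3 : (∫ s in Ioi (0:ℝ), Real.exp (-((r + lam x) * s))) = 1 / (r + lam x) :=
      exp_decay_integral (r + lam x) (by linarith)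
    have hb4 : 1 / (r + lam x) < u ε := by
      rw [div_lt_iff₀ (by linarith : (0:ℝ) < r + lam x)]
      have hx2 : 1 / u ε < lam x := hx
      rw [div_lt_iff₀ huε] at hx2
      nlinarith
    have hfinal : u (acirc x) < u ε := by
      rw [hueq x]
      calc (∫ s in Ioi (acirc x), Real.exp (-(r * s)) * p x s)
          ≤ 1 / (r + lam x) := by rw [← hb3]; exact le_trans hb1 hb2
        _ < u ε := hb4
    have hacε : acirc x < ε := by
      by_contra hcon
      push_neg at hcon
      rcases eq_or_lt_of_le hcon with heq | hlt
      · rw [← heq] at hfinal; exact lt_irrefl _ hfinal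
      · have h5 := humono (by rw [hAzero]; exact mem_Ici.mpr hε.le)
          (by rw [hAzero]; exact mem_Ici.mpr (hsol x).1.le) hlt
        linarith
    rw [Real.dist_eq, sub_zero, abs_of_pos (hsol x).1]
    exact hacε
end

section
/- Let r>0, π≥0, and a strictly decreasing survival function p with F(0)>0, where F(α)=∫_α^∞ e^{-rt}p(t)dt. Let δ=π/(1+π). Suppose â (LOIA), â° (IRIA), â* (CRIA) are positive solutions of δα+F(α)=G_i(α) for i=1,2,3 respectively, where G₁(α)=α−∫_0^α e^{-rt}p(t)dt, G₂(α)=α−(1−e^{-rα})/r, G₃(α)=r∫_0^α e^{-rt}(α−t)p(t)dt, and each G_i is increasing while δα+F(α)−G_i(α) is strictly decreasing past its zero. Then â* > â° > â. -/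
open MeasureTheory Set Filter intervalIntegral

lemma integral_exp_neg_mul (r α : ℝ) (hr : 0 < r) :
    ∫ t in (0:ℝ)..α, Real.exp (-(r*t)) = (1 - Real.exp (-(r*α))) / r := by
  have h : ∀ t ∈ uIcc (0:ℝ) α, HasDerivAt (fun t => -Real.exp (-(r*t)) / r)
      (Real.exp (-(r*t))) t := by
    intro t _
    have : HasDerivAt (fun t => -(r*t)) (-r) t := by
      have h0 := ((hasDerivAt_id t).const_mul r).neg
      simp only [mul_one] at h0
      exact h0
    have := (this.exp).neg.div_const r
    refine this.congr_deriv ?_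
    field_simp
  rw [intervalIntegral.integral_eq_sub_of_hasDerivAt h
    ((Real.continuous_exp.comp (by fun_prop)).intervalIntegrable 0 α)]
  simp [Real.exp_zero]
  ring

lemma integral_exp_neg_mul_lin (r α : ℝ) (hr : 0 < r) :
    r * ∫ t in (0:ℝ)..α, Real.exp (-(r*t)) * (α - t)
      = α - (1 - Real.exp (-(r*α))) / r := by
  have h : ∀ t ∈ uIcc (0:ℝ) α, HasDerivAt
      (fun t => -Real.exp (-(r*t)) * ((α - t)/r - 1/r^2))
      (Real.exp (-(r*t)) * (α - t)) t := by
    intro t _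
    have h1 : HasDerivAt (fun t => -(r*t)) (-r) t := by
      have h0 := ((hasDerivAt_id t).const_mul r).neg
      simp only [mul_one] at h0
      exact h0
    have h2 : HasDerivAt (fun t : ℝ => Real.exp (-(r*t))) (Real.exp (-(r*t)) * (-r)) t :=
      h1.exp
    have h3 : HasDerivAt (fun t : ℝ => (α - t)/r - 1/r^2) (-1/r) t := by
      have : HasDerivAt (fun t : ℝ => α - t) (-1) t := by
        simpa using (hasDerivAt_id t).const_sub α
      exact (this.div_const r).sub_const (1/r^2) |>.congr_deriv (by ring)
    have := (h2.neg.mul h3)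
    refine this.congr_deriv ?_
    simp only [Pi.neg_apply]
    field_simp
    ring
  rw [intervalIntegral.integral_eq_sub_of_hasDerivAt h (by
    apply Continuous.intervalIntegrable
    fun_prop)]
  field_simp
  simp only [Real.exp_zero, neg_mul, mul_zero, neg_zero]
  ring

theorem cria_dominates_iria_dominates_loia
    (r π : ℝ) (hr : 0 < r) (hπ : 0 ≤ π)
    (δ : ℝ) (hδ : δ = π / (1 + π))
    (p : ℝ → ℝ)
    (hanti : StrictAntiOn p (Ici 0))
    (hcont : ContinuousOn p (Ici 0))
    (hpos : ∀ t, 0 ≤ t → 0 < p t) (hle : ∀ t, 0 ≤ t → p t ≤ 1)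
    (hp0 : p 0 = 1)
    (hint : IntegrableOn (fun t => Real.exp (-(r * t)) * p t) (Ioi 0))
    (F G₁ G₂ G₃ : ℝ → ℝ)
    (hF : ∀ α, F α = ∫ t in Ioi α, Real.exp (-(r * t)) * p t)
    (hF0 : 0 < F 0)
    (hG₁ : ∀ α, G₁ α = α - ∫ t in (0 : ℝ)..α, Real.exp (-(r * t)) * p t)
    (hG₂ : ∀ α, G₂ α = α - (1 - Real.exp (-(r * α))) / r)
    (hG₃ : ∀ α, G₃ α = r * ∫ t in (0 : ℝ)..α, Real.exp (-(r * t)) * (α - t) * p t)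
    (hmono₁ : MonotoneOn G₁ (Ici 0)) (hmono₂ : MonotoneOn G₂ (Ici 0))
    (hmono₃ : MonotoneOn G₃ (Ici 0))
    (ahat acirc astar : ℝ)
    (hahat : 0 < ahat ∧ δ * ahat + F ahat = G₁ ahat)
    (hacirc : 0 < acirc ∧ δ * acirc + F acirc = G₂ acirc)
    (hastar : 0 < astar ∧ δ * astar + F astar = G₃ astar)
    (hdec₁ : StrictAntiOn (fun α => δ * α + F α - G₁ α) (Ici ahat))
    (hdec₂ : StrictAntiOn (fun α => δ * α + F α - G₂ α) (Ici acirc))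
    (hdec₃ : StrictAntiOn (fun α => δ * α + F α - G₃ α) (Ici astar)) :
    acirc < astar ∧ ahat < acirc := by
  obtain ⟨hhat_pos, hhat_eq⟩ := hahat
  obtain ⟨hcirc_pos, hcirc_eq⟩ := hacirc
  obtain ⟨hstar_pos, hstar_eq⟩ := hastar
  -- fun_prop facts
  have hpc : ∀ α : ℝ, 0 < α → ∀ f : ℝ → ℝ, Continuous f →
      IntervalIntegrable (fun t => f t * p t) volume 0 α := by
    intro α hα f hf
    apply ContinuousOn.intervalIntegrable
    rw [uIcc_of_le hα.le]
    exact (hf.continuousOn).mul (hcont.mono (Icc_subset_Ici_self))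
  -- p t < 1 on Ioo 0 α
  have hplt : ∀ t : ℝ, 0 < t → p t < 1 := by
    intro t ht
    have := hanti (self_mem_Ici) (le_of_lt ht : (0:ℝ) ≤ t) ht
    rwa [hp0] at this
  -- G₂ < G₁ on positive α
  have h21 : ∀ α : ℝ, 0 < α → G₂ α < G₁ α := by
    intro α hα
    rw [hG₁, hG₂]
    have hi1 : IntervalIntegrable (fun t => Real.exp (-(r*t))) volume 0 α := by
      apply Continuous.intervalIntegrable; fun_prop
    have hi2 : IntervalIntegrable (fun t => Real.exp (-(r*t)) * p t) volume 0 α :=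
      hpc α hα _ (by fun_prop)
    have key : 0 < ∫ t in (0:ℝ)..α, (Real.exp (-(r*t)) - Real.exp (-(r*t)) * p t) := by
      apply intervalIntegral.intervalIntegral_pos_of_pos_on (hi1.sub hi2)
      · intro t ht
        have h1 : p t < 1 := hplt t ht.1
        have : Real.exp (-(r*t)) * p t < Real.exp (-(r*t)) * 1 :=
          mul_lt_mul_of_pos_left h1 (Real.exp_pos _)
        simp only [mul_one] at this
        linarith
      · exact hα
    rw [intervalIntegral.integral_sub hi1 hi2, integral_exp_neg_mul r α hr] at key
    linarith
  -- G₃ < G₂ on positive α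
  have h32 : ∀ α : ℝ, 0 < α → G₃ α < G₂ α := by
    intro α hα
    rw [hG₂, hG₃, ← integral_exp_neg_mul_lin r α hr]
    have hi1 : IntervalIntegrable (fun t => Real.exp (-(r*t)) * (α - t)) volume 0 α := by
      apply Continuous.intervalIntegrable; fun_prop
    have hi2 : IntervalIntegrable (fun t => Real.exp (-(r*t)) * (α - t) * p t) volume 0 α :=
      hpc α hα _ (by fun_prop)
    have key : 0 < ∫ t in (0:ℝ)..α,
        (Real.exp (-(r*t)) * (α - t) - Real.exp (-(r*t)) * (α - t) * p t) := by
      apply intervalIntegral.intervalIntegral_pos_of_pos_on (hi1.sub hi2)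
      · intro t ht
        have h1 : p t < 1 := hplt t ht.1
        have hb : 0 < Real.exp (-(r*t)) * (α - t) :=
          mul_pos (Real.exp_pos _) (by linarith [ht.2])
        nlinarith
      · exact hα
    rw [intervalIntegral.integral_sub hi1 hi2] at key
    nlinarith
  constructor
  · -- acirc < astar
    by_contra h
    push_neg at h
    rcases eq_or_lt_of_le h with heq | hlt
    · have := h32 astar hstar_pos
      rw [← heq] at hcirc_eq
      linarith [hstar_eq, hcirc_eq]
    · have := hdec₃ (self_mem_Ici) (le_of_lt hlt : astar ≤ acirc) hlt
      simp only at this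
      have h2 := h32 acirc hcirc_pos
      linarith [hstar_eq, hcirc_eq]
  · -- ahat < acirc
    by_contra h
    push_neg at h
    rcases eq_or_lt_of_le h with heq | hlt
    · have := h21 ahat hhat_pos
      rw [heq] at hcirc_eq
      linarith [hcirc_eq, hhat_eq]
    · have := hdec₂ (self_mem_Ici) (le_of_lt hlt : acirc ≤ ahat) hlt
      simp only at this
      have h2 := h21 ahat hhat_pos
      linarith [hstar_eq, hhat_eq, hcirc_eq]
end

section
/- For exponential mortality p(t)=e^{-λt}, λ>0, the unloaded cash-refund price a*(r) satisfies r·a*(r) → 1 as r → ∞. -/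
open MeasureTheory Set Filter

lemma exp_Ioi_int (μ A : ℝ) (hμ : 0 < μ) :
    (∫ t in Ioi A, Real.exp (-(μ * t))) = Real.exp (-(μ * A)) / μ := by
  have hderiv : ∀ x ∈ Ici A,
      HasDerivAt (fun t => -(Real.exp (-(μ * t)) / μ)) (Real.exp (-(μ * x))) x := by
    intro x _
    have h := (((hasDerivAt_id x).const_mul μ).neg.exp.div_const μ).neg
    refine h.congr_deriv ?_
    simp only [Pi.neg_apply, id]
    field_simp
  have hint : IntegrableOn (fun x : ℝ => Real.exp (-(μ * x))) (Ioi A) := by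
    simpa [neg_mul] using exp_neg_integrableOn_Ioi A hμ
  have hlim : Tendsto (fun t => -(Real.exp (-(μ * t)) / μ)) atTop (nhds 0) := by
    have h1 : Tendsto (fun t : ℝ => μ * t) atTop atTop :=
      tendsto_id.const_mul_atTop hμ
    have h2 : Tendsto (fun t : ℝ => Real.exp (-(μ * t))) atTop (nhds 0) :=
      Real.tendsto_exp_neg_atTop_nhds_zero.comp h1
    simpa using (h2.div_const μ).neg
  have := MeasureTheory.integral_Ioi_of_hasDerivAt_of_tendsto' hderiv hint hlim
  rw [this]; ring

lemma interval_int (μ A : ℝ) (hμ : 0 < μ) :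
    (∫ t in (0:ℝ)..A, Real.exp (-(μ * t)) * (A - t)) =
      (μ * A - 1 + Real.exp (-(μ * A))) / μ ^ 2 := by
  have hderiv : ∀ x ∈ uIcc (0:ℝ) A,
      HasDerivAt (fun t => -(Real.exp (-(μ * t)) * ((A - t) / μ - 1 / μ ^ 2)))
        (Real.exp (-(μ * x)) * (A - x)) x := by
    intro x _
    have he : HasDerivAt (fun t => Real.exp (-(μ * t))) (Real.exp (-(μ * x)) * -μ) x := by
      simpa using ((hasDerivAt_id x).const_mul μ).neg.exp
    have hg : HasDerivAt (fun t : ℝ => (A - t) / μ - 1 / μ ^ 2) (-1 / μ) x := by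
      have := (((hasDerivAt_id x).const_sub A).div_const μ).sub_const (1 / μ ^ 2)
      simpa using this
    have := (he.mul hg).neg
    refine this.congr_deriv ?_
    field_simp
    ring
  have hint : IntervalIntegrable (fun t => Real.exp (-(μ * t)) * (A - t))
      MeasureTheory.volume 0 A := (Continuous.mul (by continuity) (by continuity)).intervalIntegrable _ _
  rw [intervalIntegral.integral_eq_sub_of_hasDerivAt hderiv hint]
  simp only [mul_zero, neg_zero, Real.exp_zero, sub_zero, one_mul]
  field_simp
  ring

theorem exponential_mortality_cria_asymptotics_high_rates
    (lam : ℝ) (hlam : 0 < lam)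
    (astar : ℝ → ℝ)
    (hsol : ∀ r, 0 < r → 0 < astar r ∧
      (∫ t in Ioi (astar r), Real.exp (-(r * t)) * Real.exp (-(lam * t))) =
        r * ∫ t in (0 : ℝ)..(astar r),
          Real.exp (-(r * t)) * (astar r - t) * Real.exp (-(lam * t))) :
    Tendsto (fun r => r * astar r) atTop (nhds 1) := by
  have key : ∀ r, 0 < r → r / (r + lam) ≤ r * astar r ∧ r * astar r ≤ 1 := by
    intro r hr
    obtain ⟨hA, heq⟩ := hsol r hr
    set A := astar r with hAdef
    set μ := r + lam with hμdef
    have hμ : 0 < μ := by positivity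
    have e1 : (∫ t in Ioi A, Real.exp (-(r * t)) * Real.exp (-(lam * t)))
        = Real.exp (-(μ * A)) / μ := by
      rw [← exp_Ioi_int μ A hμ]
      apply setIntegral_congr_fun (measurableSet_Ioi)
      intro t _
      show Real.exp (-(r * t)) * Real.exp (-(lam * t)) = Real.exp (-(μ * t))
      rw [← Real.exp_add, hμdef]
      ring_nf
    have e2 : (∫ t in (0:ℝ)..A, Real.exp (-(r * t)) * (A - t) * Real.exp (-(lam * t)))
        = (μ * A - 1 + Real.exp (-(μ * A))) / μ ^ 2 := by
      rw [← interval_int μ A hμ]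
      apply intervalIntegral.integral_congr
      intro t _
      show Real.exp (-(r * t)) * (A - t) * Real.exp (-(lam * t))
          = Real.exp (-(μ * t)) * (A - t)
      rw [mul_right_comm, ← Real.exp_add, hμdef]
      ring_nf
    rw [e1, e2] at heq
    set E := Real.exp (-(μ * A)) with hE
    have hE0 : 0 < E := Real.exp_pos _
    have hE1 : E < 1 := by
      rw [hE]
      have hlt : -(μ * A) < 0 := by nlinarith [mul_pos hμ hA]
      calc Real.exp (-(μ * A)) < Real.exp 0 := Real.exp_lt_exp.2 hlt
        _ = 1 := Real.exp_zero
    have hμne : μ ≠ 0 := ne_of_gt hμ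
    have h2 : E * μ = r * (μ * A - 1 + E) := by
      apply mul_right_cancel₀ hμne
      field_simp at heq
      linear_combination μ * heq
    have hkey : lam * E = r * (μ * A - 1) := by
      linear_combination h2 - E * hμdef
    have h1 : 1 < μ * A := by nlinarith [mul_pos hlam hE0]
    have h2' : r * (μ * A - 1) < lam := by
      nlinarith [mul_lt_mul_of_pos_left hE1 hlam]
    constructor
    · rw [div_le_iff₀ hμ]
      nlinarith [mul_le_mul_of_nonneg_left h1.le hr.le]
    · rw [← mul_le_mul_iff_of_pos_right hμ]
      nlinarith [h2']
  have hlow : Tendsto (fun r : ℝ => r / (r + lam)) atTop (nhds 1) := by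
    have h0 : Tendsto (fun r : ℝ => lam / (r + lam)) atTop (nhds 0) :=
      Tendsto.div_atTop tendsto_const_nhds (tendsto_atTop_add_const_right _ lam tendsto_id)
    have h1 : Tendsto (fun r : ℝ => 1 - lam / (r + lam)) atTop (nhds 1) := by
      simpa using (tendsto_const_nhds (x := (1:ℝ))).sub h0
    refine h1.congr' ?_
    filter_upwards [eventually_gt_atTop 0] with r hr
    have : r + lam ≠ 0 := by positivity
    field_simp
    ring
  refine tendsto_of_tendsto_of_tendsto_of_le_of_le' hlow tendsto_const_nhds ?_ ?_
  · filter_upwards [eventually_gt_atTop 0] with r hr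
    exact (key r hr).1
  · filter_upwards [eventually_gt_atTop 0] with r hr
    exact (key r hr).2
end
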